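/- arXiv:2303.04590 — 9 statements merged into one kernel-verified Lean document; each statement's English description precedes it below -/
import Mathlib

section
/- For every simple graph G of diameter 2 (every two distinct vertices are adjacent or have a common neighbor), the pebbling number of G with all edge weights 2 satisfies π(G^(2)) ≤ #V(G) + 1. -/
open Finset

/-- An edge-weighted digraph: an edge relation together with an edge-weight
function assigning each edge a weight of at least two. -/
structure EWDigraph (V : Type) where
  Edge : V → V → Prop
  weight : V → V → ℕ
  weight_ge : ∀ u v, Edge u v → 2 ≤ weight u v

namespace EWDigraph

variable {V : Type}

/-- A single pebbling step: remove `weight u v` pebbles from `u` and add one pebble to `v`. -/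
def Step [DecidableEq V] (G : EWDigraph V) (c₁ c₂ : V → ℕ) : Prop :=
  ∃ u v, G.Edge u v ∧ G.weight u v ≤ c₁ u ∧
    c₂ = fun w => if w = u then c₁ u - G.weight u v
      else if w = v then c₁ v + 1 else c₁ w

/-- `c` is `n`-fold `t`-solvable. -/
def Solvable [DecidableEq V] (G : EWDigraph V) (n : ℕ) (t : V) (c : V → ℕ) : Prop :=
  ∃ c', Relation.ReflTransGen G.Step c c' ∧ n ≤ c' t

/-- `π_n(G,t) ≤ p`: every configuration of size at least `p` is `n`-fold `t`-solvable. -/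
def PiBound [Fintype V] [DecidableEq V] (G : EWDigraph V) (n : ℕ) (t : V) (p : ℕ) : Prop :=
  ∀ c : V → ℕ, p ≤ ∑ v, c v → G.Solvable n t c

/-- The `n`-fold `t`-pebbling number `π_n(G,t)`: the least `p` such that every
configuration of size at least `p` is `n`-fold `t`-solvable. -/
noncomputable def pi [Fintype V] [DecidableEq V] (G : EWDigraph V) (n : ℕ) (t : V) : ℕ :=
  sInf {p | G.PiBound n t p}

/-- The pebbling number `π(G)`: the largest `1`-fold pebbling number among the vertices. -/
noncomputable def piMax [Fintype V] [DecidableEq V] (G : EWDigraph V) : ℕ :=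
  Finset.univ.sup fun t => G.pi 1 t

end EWDigraph

/-- `s#(c)`: the number of vertices carrying at least one pebble. -/
def supp {V : Type} [Fintype V] (c : V → ℕ) : ℕ :=
  (Finset.univ.filter fun v => 0 < c v).card

/-- The `k`-reduced size `r_k(c) = |c| - (k-1)(s#(c) - 1)` of a configuration. -/
def rsize {V : Type} [Fintype V] (k : ℕ) (c : V → ℕ) : ℤ :=
  (∑ v, (c v : ℤ)) - ((k : ℤ) - 1) * ((supp c : ℤ) - 1)

/-- `τ_{n,k}(G,t) ≤ p`: every configuration `c` with `|c| = p - s#(c) + 1 + m` has an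
`n`-fold `t`-solvable subconfiguration whose residual has `k`-reduced size at least `m`. -/
def EWDigraph.TauBound {V : Type} [Fintype V] [DecidableEq V] (G : EWDigraph V)
    (n k : ℕ) (t : V) (p : ℕ) : Prop :=
  ∀ (m : ℕ) (c : V → ℕ), (∑ v, c v) + supp c = p + 1 + m →
    ∃ c' : V → ℕ, (∀ v, c' v ≤ c v) ∧ G.Solvable n t c' ∧
      (m : ℤ) ≤ rsize k (fun v => c v - c' v)

/-- `G^(k)`: the edge-weighted digraph obtained from a simple graph by making every
edge bidirectional with weight `k`. -/
def SimpleGraph.toEW {V : Type} (H : SimpleGraph V) (k : ℕ) (hk : 2 ≤ k) : EWDigraph V where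
  Edge := H.Adj
  weight _ _ := k
  weight_ge _ _ _ := hk


section PebblingHelpers

variable {V : Type} [DecidableEq V] {G : SimpleGraph V} {t : V}

private lemma step2 (c : V → ℕ) {u v : V} (h : G.Adj u v) (hc : 2 ≤ c u) :
    (G.toEW 2 (le_refl 2)).Step c
      (fun w => if w = u then c u - 2 else if w = v then c v + 1 else c w) :=
  ⟨u, v, h, hc, rfl⟩

private lemma solv_step {c c' : V → ℕ} (h : (G.toEW 2 (le_refl 2)).Step c c')
    (hs : (G.toEW 2 (le_refl 2)).Solvable 1 t c') :
    (G.toEW 2 (le_refl 2)).Solvable 1 t c := by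
  obtain ⟨c'', h1, h2⟩ := hs
  exact ⟨c'', h1.head h, h2⟩

/-- one move: a neighbor of `t` with two pebbles. -/
private lemma solve1 {c : V → ℕ} {x : V} (hxt : G.Adj x t) (hc : 2 ≤ c x) :
    (G.toEW 2 (le_refl 2)).Solvable 1 t c := by
  refine solv_step (step2 c hxt hc) ⟨_, Relation.ReflTransGen.refl, ?_⟩
  simp [hxt.ne']

/-- donor `u` with 2, through `x` (with ≥1) adjacent to `t`. -/
private lemma solve2 {c : V → ℕ} {u x : V} (hux : G.Adj u x) (hxt : G.Adj x t)
    (hcu : 2 ≤ c u) (hcx : 1 ≤ c x) :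
    (G.toEW 2 (le_refl 2)).Solvable 1 t c := by
  refine solv_step (step2 c hux hcu) (solve1 hxt ?_)
  simp only [hux.ne', if_neg, if_false, if_pos rfl]
  simp [hux.ne']
  omega

/-- two donors `u ≠ u'` with 2 each, into common neighbor `w` of `t`. -/
private lemma solve2a {c : V → ℕ} {u u' w : V} (huw : G.Adj u w) (hu'w : G.Adj u' w)
    (hwt : G.Adj w t) (hne : u ≠ u') (hcu : 2 ≤ c u) (hcu' : 2 ≤ c u') :
    (G.toEW 2 (le_refl 2)).Solvable 1 t c := by
  refine solv_step (step2 c huw hcu) (solve2 hu'w hwt ?_ ?_)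
  · simp [hne.symm, hu'w.ne]
    omega
  · simp [huw.ne']

/-- a single donor `u` with 4 pebbles at distance two. -/
private lemma solve2b {c : V → ℕ} {u w : V} (huw : G.Adj u w) (hwt : G.Adj w t)
    (hcu : 4 ≤ c u) :
    (G.toEW 2 (le_refl 2)).Solvable 1 t c := by
  refine solv_step (step2 c huw (by omega)) (solve2 huw hwt ?_ ?_)
  · simp; omega
  · simp [huw.ne']

/-- donor `u'` with 2 boosts `u` which has 3, `u` at distance two via `w`. -/
private lemma solve5 {c : V → ℕ} {u u' w : V} (hu'u : G.Adj u' u) (huw : G.Adj u w)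
    (hwt : G.Adj w t) (hcu' : 2 ≤ c u') (hcu : 3 ≤ c u) :
    (G.toEW 2 (le_refl 2)).Solvable 1 t c := by
  refine solv_step (step2 c hu'u hcu') (solve2b huw hwt ?_)
  simp [hu'u.ne']
  omega

/-- donor `u'` pumps `x` (with one pebble), `x` boosts `u` (with 3), `u` dist two via `w`. -/
private lemma solve3 {c : V → ℕ} {u u' x w : V} (hu'x : G.Adj u' x) (hxu : G.Adj x u)
    (huw : G.Adj u w) (hwt : G.Adj w t) (hcu' : 2 ≤ c u') (hcx : 1 ≤ c x)
    (hcu : 3 ≤ c u) (hne : u ≠ u') :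
    (G.toEW 2 (le_refl 2)).Solvable 1 t c := by
  refine solv_step (step2 c hu'x hcu') (solve5 hxu huw hwt ?_ ?_)
  · simp [hu'x.ne']; omega
  · simp [hne, hxu.ne', hcu]

/-- donors `d1, d2` pump `z`, `z` boosts `a` (with 3), `a` dist two via `w`. -/
private lemma solve4 {c : V → ℕ} {d1 d2 z a w : V} (h1 : G.Adj d1 z) (h2 : G.Adj d2 z)
    (hza : G.Adj z a) (haw : G.Adj a w) (hwt : G.Adj w t) (h12 : d1 ≠ d2)
    (ha1 : a ≠ d1) (ha2 : a ≠ d2) (hc1 : 2 ≤ c d1) (hc2 : 2 ≤ c d2) (hca : 3 ≤ c a) :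
    (G.toEW 2 (le_refl 2)).Solvable 1 t c := by
  refine solv_step (step2 c h1 hc1) ?_
  refine solv_step (step2 _ h2 ?_) (solve5 hza haw hwt ?_ ?_)
  · simp [h12.symm, h2.ne]; omega
  · simp [h2.ne', h1.ne']
  · simp [ha2, ha1, hza.ne', hca]

end PebblingHelpers

/-- For every simple graph of diameter 2, `π(G^(2)) ≤ #V(G) + 1`. -/
theorem stmt_2 {V : Type} [Fintype V] [DecidableEq V] (G : SimpleGraph V)
    (hdiam : ∀ u v : V, u ≠ v → G.Adj u v ∨ ∃ w, G.Adj u w ∧ G.Adj w v) :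
    ∀ t : V, (G.toEW 2 (le_refl 2)).PiBound 1 t (Fintype.card V + 1) := by
  intro t c hsum
  by_contra hns
  -- basic facts
  have hct : c t = 0 := by
    by_contra h
    exact hns ⟨c, Relation.ReflTransGen.refl, by omega⟩
  have hle1 : ∀ x, G.Adj x t → c x ≤ 1 := by
    intro x hx
    by_contra h
    exact hns (solve1 hx (by omega))
  have hle3 : ∀ u, u ≠ t → c u ≤ 3 := by
    intro u hu
    by_contra h
    rcases hdiam u t hu with hadj | ⟨w, h1, h2⟩
    · exact hns (solve1 hadj (by omega))
    · exact hns (solve2b h1 h2 (by omega))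
  -- choice of a common neighbor with t for each vertex with ≥ 2 pebbles
  have hWex : ∀ u : V, ∃ x, 2 ≤ c u → G.Adj u x ∧ G.Adj x t ∧ c x = 0 := by
    intro u
    by_cases hu : 2 ≤ c u
    · have hut : u ≠ t := by intro e; rw [e] at hu; omega
      rcases hdiam u t hut with hadj | ⟨x, h1, h2⟩
      · exact absurd (hle1 u hadj) (by omega)
      · refine ⟨x, fun _ => ⟨h1, h2, ?_⟩⟩
        by_contra h
        exact hns (solve2 h1 h2 hu (by omega))
    · exact ⟨t, fun h => absurd h hu⟩
  choose wf hwf using hWex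
  -- choice of a common neighbor for each pair of vertices with 3 pebbles
  have hZex : ∀ u u' : V, ∃ x, c u = 3 → c u' = 3 → u ≠ u' →
      G.Adj u x ∧ G.Adj u' x ∧ ¬G.Adj x t ∧ c x = 0 ∧ x ≠ t := by
    intro u u'
    by_cases hyp : c u = 3 ∧ c u' = 3 ∧ u ≠ u'
    · obtain ⟨hu, hu', hne⟩ := hyp
      obtain ⟨hwa, hwt, -⟩ := hwf u (by omega)
      have hnadj : ¬ G.Adj u u' := by
        intro hadj
        exact hns (solve5 hadj.symm hwa hwt (by omega) (by omega))
      rcases hdiam u u' hne with hadj | ⟨x, h1, h2⟩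
      · exact absurd hadj hnadj
      · have h2' : G.Adj u' x := h2.symm
        have hxt : x ≠ t := by
          intro e
          exact hns (solve1 (e ▸ h1) (by omega))
        have hnxt : ¬ G.Adj x t := by
          intro hadj
          exact hns (solve2a h1 h2' hadj hne (by omega) (by omega))
        have hcx : c x = 0 := by
          by_contra h
          rcases Nat.lt_or_ge (c x) 2 with hlt | hge
          · exact hns (solve3 h2' h1.symm hwa hwt (by omega) (by omega) (by omega) hne)
          · exact hns (solve5 h1.symm hwa hwt hge (by omega))
        exact ⟨x, fun _ _ _ => ⟨h1, h2', hnxt, hcx, hxt⟩⟩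
    · refine ⟨t, fun h1 h2 h3 => absurd ⟨h1, h2, h3⟩ hyp⟩
  choose zf hzf using hZex
  -- the finsets
  set B : Finset V := univ.filter (fun u => 2 ≤ c u) with hB
  set B3 : Finset V := univ.filter (fun u => c u = 3) with hB3
  have hmemB : ∀ v, v ∈ B ↔ 2 ≤ c v := by intro v; simp [hB]
  have hmemB3 : ∀ v, v ∈ B3 ↔ c v = 3 := by intro v; simp [hB3]
  have hB3B : B3 ⊆ B := by
    intro v hv
    rw [hmemB3] at hv
    rw [hmemB]
    omega
  set W : Finset V := B.image wf with hW
  set Z : Finset V := B3.offDiag.image (fun p => zf p.1 p.2) with hZ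
  -- W facts
  have hWcard : W.card = B.card := by
    apply Finset.card_image_of_injOn
    intro u hu u' hu' he
    by_contra hne
    rw [Finset.mem_coe, hmemB] at hu hu'
    obtain ⟨ha1, ha2, -⟩ := hwf u hu
    obtain ⟨hb1, hb2, -⟩ := hwf u' hu'
    exact hns (solve2a ha1 (he ▸ hb1) ha2 hne hu hu')
  have hWzero : ∀ v ∈ W, c v = 0 ∧ G.Adj v t := by
    intro v hv
    rw [hW, Finset.mem_image] at hv
    obtain ⟨u, hu, he⟩ := hv
    rw [hmemB] at hu
    obtain ⟨h1, h2, h3⟩ := hwf u hu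
    exact ⟨he ▸ h3, he ▸ h2⟩
  -- Z facts
  have hZzero : ∀ v ∈ Z, c v = 0 ∧ ¬G.Adj v t ∧ v ≠ t := by
    intro v hv
    rw [hZ, Finset.mem_image] at hv
    obtain ⟨p, hp, he⟩ := hv
    rw [Finset.mem_offDiag] at hp
    obtain ⟨hp1, hp2, hp12⟩ := hp
    rw [hmemB3] at hp1 hp2
    obtain ⟨-, -, h3, h4, h5⟩ := hzf p.1 p.2 hp1 hp2 hp12
    exact ⟨he ▸ h4, he ▸ h3, he ▸ h5⟩
  -- D
  set D : Finset V := insert t (W ∪ Z) with hD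
  have hDzero : ∀ v ∈ D, c v = 0 := by
    intro v hv
    rw [hD, Finset.mem_insert, Finset.mem_union] at hv
    rcases hv with rfl | hv | hv
    · exact hct
    · exact (hWzero v hv).1
    · exact (hZzero v hv).1
  have htW : t ∉ W := fun h => (hWzero t h).2.ne rfl
  have htZ : t ∉ Z := fun h => (hZzero t h).2.2 rfl
  have hWZ : Disjoint W Z := by
    rw [Finset.disjoint_left]
    intro v hv hv'
    exact (hZzero v hv').2.1 (hWzero v hv).2
  have hDcard : D.card = 1 + B.card + Z.card := by
    rw [hD, Finset.card_insert_of_notMem (by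
      rw [Finset.mem_union]; tauto), Finset.card_union_of_disjoint hWZ, hWcard]
    omega
  have hDsub : D ⊆ univ \ B := by
    intro v hv
    rw [Finset.mem_sdiff, hmemB]
    have := hDzero v hv
    exact ⟨Finset.mem_univ v, by omega⟩
  -- fiber bound for Z
  have hfib : ∀ a ∈ B3.offDiag.image (fun p => zf p.1 p.2),
      (B3.offDiag.filter (fun q => zf q.1 q.2 = a)).card ≤ 2 := by
    intro a ha
    rw [Finset.mem_image] at ha
    obtain ⟨p, hp, hpe⟩ := ha
    have hp' := hp
    rw [Finset.mem_offDiag] at hp'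
    obtain ⟨hp1, hp2, hp12⟩ := hp'
    rw [hmemB3] at hp1 hp2
    obtain ⟨hq1z, hq2z, -, -, -⟩ := hzf p.1 p.2 hp1 hp2 hp12
    refine le_trans (Finset.card_le_card (show _ ⊆ ({p, (p.2, p.1)} : Finset (V × V)) from ?_))
      (le_trans (Finset.card_insert_le _ _) (by simp))
    intro q hq
    rw [Finset.mem_filter, Finset.mem_offDiag] at hq
    obtain ⟨⟨hq1, hq2, hq12⟩, heq⟩ := hq
    rw [hmemB3] at hq1 hq2
    rw [Finset.mem_insert, Finset.mem_singleton]
    by_contra hcon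
    push_neg at hcon
    obtain ⟨hnp, hns'⟩ := hcon
    -- find a third vertex a₀ among {q.1, q.2} not in {p.1, p.2}
    obtain ⟨ha1z, ha2z, -, -, -⟩ := hzf q.1 q.2 hq1 hq2 hq12
    have hqp : zf q.1 q.2 = zf p.1 p.2 := heq.trans hpe.symm
    rw [hqp] at ha1z ha2z
    have key : ∃ a₀, c a₀ = 3 ∧ G.Adj a₀ (zf p.1 p.2) ∧ a₀ ≠ p.1 ∧ a₀ ≠ p.2 := by
      rcases eq_or_ne q.1 p.1 with e1 | e1
      · have e2 : q.2 ≠ p.1 := fun h => hq12 (e1.trans h.symm)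
        have e3 : q.2 ≠ p.2 := fun h => hnp (Prod.ext e1 h)
        exact ⟨q.2, hq2, ha2z, e2, e3⟩
      · rcases eq_or_ne q.1 p.2 with e1' | e1'
        · have e2 : q.2 ≠ p.1 := fun h => hns' (Prod.ext e1' h)
          have e3 : q.2 ≠ p.2 := fun h => hq12 (e1'.trans h.symm)
          exact ⟨q.2, hq2, ha2z, e2, e3⟩
        · exact ⟨q.1, hq1, ha1z, e1, e1'⟩
    obtain ⟨a₀, hca, haz, hap1, hap2⟩ := key
    obtain ⟨hb1, hb2, -⟩ := hwf a₀ (by omega)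
    exact hns (solve4 hq1z hq2z haz.symm hb1 hb2 hp12 hap1 hap2
      (by omega) (by omega) (by omega))
  have hZcard : B3.offDiag.card ≤ 2 * Z.card := by
    rw [hZ]
    exact Finset.card_le_mul_card_image _ 2 hfib
  -- the counting
  have e1 : ∑ v ∈ univ \ B, c v + ∑ v ∈ B, c v = ∑ v, c v :=
    Finset.sum_sdiff (Finset.subset_univ B)
  have e2 : ∑ v ∈ (univ \ B) \ D, c v + ∑ v ∈ D, c v = ∑ v ∈ univ \ B, c v :=
    Finset.sum_sdiff hDsub
  have e3 : ∑ v ∈ D, c v = 0 := Finset.sum_eq_zero hDzero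
  have e4 : ∑ v ∈ (univ \ B) \ D, c v ≤ ((univ \ B) \ D).card * 1 := by
    refine le_trans (Finset.sum_le_card_nsmul _ _ 1 ?_) (by simp)
    intro v hv
    rw [Finset.mem_sdiff, Finset.mem_sdiff, hmemB] at hv
    omega
  have e5 : ∑ v ∈ B \ B3, c v + ∑ v ∈ B3, c v = ∑ v ∈ B, c v :=
    Finset.sum_sdiff hB3B
  have e6 : ∑ v ∈ B3, c v = B3.card * 3 := by
    rw [Finset.sum_congr rfl (fun v hv => (hmemB3 v).mp hv), Finset.sum_const, smul_eq_mul]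
  have e7 : ∑ v ∈ B \ B3, c v ≤ (B \ B3).card * 2 := by
    refine le_trans (Finset.sum_le_card_nsmul _ _ 2 ?_) (by simp)
    intro v hv
    rw [Finset.mem_sdiff, hmemB, hmemB3] at hv
    have hvt : v ≠ t := by intro e; rw [e, hct] at hv; omega
    have := hle3 v hvt
    omega
  have e8 : (B \ B3).card + B3.card = B.card := Finset.card_sdiff_add_card_eq_card hB3B
  have e9 : ((univ \ B) \ D).card + D.card = (univ \ B).card :=
    Finset.card_sdiff_add_card_eq_card hDsub
  have e10 : (univ \ B).card + B.card = Fintype.card V := by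
    rw [Finset.card_sdiff_add_card_eq_card (Finset.subset_univ B), Finset.card_univ]
  have e13 : B3.offDiag.card = B3.card * B3.card - B3.card := Finset.offDiag_card B3
  -- derive Z.card + 2 ≤ B3.card
  have hkey : Z.card + 2 ≤ B3.card := by omega
  -- quadratic contradiction
  have h5 : B3.card * B3.card ≤ 2 * Z.card + B3.card := by
    rw [e13] at hZcard
    omega
  have h6 : 2 * Z.card + B3.card < 3 * B3.card := by omega
  have h7 : B3.card * B3.card < 3 * B3.card := lt_of_le_of_lt h5 h6
  have h8 : B3.card < 3 := Nat.lt_of_mul_lt_mul_right h7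
  have h9 : B3.card = 2 := by omega
  rw [h9] at h5
  omega
end

section
/- (Weight Function Lemma) Let G be an edge-weighted digraph in which every edge has weight 2, and let t be a vertex of G. If w is a weight function for t and c is a configuration on G with |w·c| > |w|, then c is t-solvable. -/
open Finset

open Finset

private lemma wfl_aux {V : Type} [Fintype V] [DecidableEq V] (G : EWDigraph V)
    (hw2 : ∀ u v, G.Edge u v → G.weight u v = 2) (t : V)
    (w : V → NNRat) (hwt : w t = 0)
    (hwf : ∀ u, 0 < w u → ¬ G.Edge u t → ∃ v, G.Edge u v ∧ 2 * w u ≤ w v) :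
    ∀ N (c : V → ℕ), (∑ v, c v) = N →
      (∑ v, w v) < (∑ v, w v * (c v : NNRat)) → G.Solvable 1 t c := by
  intro N
  induction N using Nat.strong_induction_on with
  | _ N ih =>
  intro c hN hc
  -- find u with positive weight and at least 2 pebbles
  obtain ⟨u, hwu, hcu⟩ : ∃ u, 0 < w u ∧ 2 ≤ c u := by
    by_contra h
    push_neg at h
    refine absurd hc (not_lt.2 (Finset.sum_le_sum fun v _ => ?_))
    by_cases hv : w v = 0
    · simp [hv]
    · have hwv : 0 < w v := lt_of_le_of_ne zero_le (Ne.symm hv)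
      have : c v ≤ 1 := by have := h v hwv; omega
      calc w v * (c v : NNRat) ≤ w v * 1 := by
            exact mul_le_mul_right (by exact_mod_cast this) _
        _ = w v := mul_one _
  have hut : u ≠ t := fun h => by rw [h, hwt] at hwu; exact lt_irrefl _ hwu
  by_cases het : G.Edge u t
  · refine ⟨fun x => if x = u then c u - 2 else if x = t then c t + 1 else c x,
      Relation.ReflTransGen.single ⟨u, t, het, by rw [hw2 u t het]; exact hcu, by simp only [hw2 u t het]⟩, ?_⟩
    simp [hut.symm]
  · obtain ⟨v, huv, hwv⟩ := hwf u hwu het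
    have huvne : u ≠ v := by
      intro h
      rw [← h] at hwv
      have h2 : w u + w u ≤ w u + 0 := by simpa [two_mul] using hwv
      have := le_of_add_le_add_left h2
      exact absurd (le_antisymm this zero_le) hwu.ne'
    set c₂ : V → ℕ := fun x => if x = u then c u - 2 else if x = v then c v + 1 else c x
      with hc₂def
    have hstep : G.Step c c₂ := ⟨u, v, huv, by rw [hw2 u v huv]; exact hcu, by simp only [hw2 u v huv]; exact hc₂def⟩
    -- nat sum
    have h1 : ∀ x ∈ (univ : Finset V), c₂ x + (if x = u then 2 else 0)
        = c x + (if x = v then 1 else 0) := by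
      intro x _
      simp only [hc₂def]
      by_cases hx : x = u
      · subst hx; simp [huvne]; omega
      · by_cases hx' : x = v
        · subst hx'; simp [hx]
        · simp [hx, hx']
    have hsum : (∑ x, c₂ x) + 2 = (∑ x, c x) + 1 := by
      have h2 := Finset.sum_congr rfl h1
      rw [Finset.sum_add_distrib, Finset.sum_add_distrib,
        Finset.sum_ite_eq' univ u, Finset.sum_ite_eq' univ v] at h2
      simpa using h2
    -- weighted sum
    have hq1 : ∀ x ∈ (univ : Finset V), w x * (c₂ x : NNRat) + (if x = u then 2 * w u else 0)
        = w x * (c x : NNRat) + (if x = v then w v else 0) := by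
      intro x _
      simp only [hc₂def]
      by_cases hx : x = u
      · subst hx
        have hcast : ((c x - 2 : ℕ) : NNRat) + 2 = (c x : NNRat) := by
          exact_mod_cast Nat.sub_add_cancel hcu
        rw [if_pos rfl, if_pos rfl, if_neg huvne, add_zero, ← hcast]
        ring
      · by_cases hx' : x = v
        · subst hx'
          simp only [if_neg hx, if_pos rfl, if_true]
          push_cast
          ring
        · simp [hx, hx']
    have hq : (∑ x, w x * (c₂ x : NNRat)) + 2 * w u
        = (∑ x, w x * (c x : NNRat)) + w v := by
      have h2 := Finset.sum_congr rfl hq1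
      rw [Finset.sum_add_distrib, Finset.sum_add_distrib,
        Finset.sum_ite_eq' univ u, Finset.sum_ite_eq' univ v] at h2
      simpa using h2
    have hc2 : (∑ x, w x) < ∑ x, w x * (c₂ x : NNRat) := by
      have h3 : (∑ x, w x) + 2 * w u < (∑ x, w x * (c₂ x : NNRat)) + 2 * w u := by
        rw [hq]
        calc (∑ x, w x) + 2 * w u < (∑ x, w x * (c x : NNRat)) + 2 * w u :=
              by gcongr
          _ ≤ (∑ x, w x * (c x : NNRat)) + w v := by gcongr
      exact lt_of_add_lt_add_right h3
    obtain ⟨c', hrel, hct⟩ := ih (∑ x, c₂ x) (by omega) c₂ rfl hc2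
    exact ⟨c', Relation.ReflTransGen.head hstep hrel, hct⟩

/-- The Weight Function Lemma: if all edges of `G` have weight 2, `w` is a weight
function for `t`, and `|w·c| > |w|`, then `c` is `t`-solvable. -/
theorem stmt_3 {V : Type} [Fintype V] [DecidableEq V] (G : EWDigraph V)
    (hw2 : ∀ u v, G.Edge u v → G.weight u v = 2) (t : V)
    (w : V → NNRat) (hwt : w t = 0)
    (hwf : ∀ u, 0 < w u → ¬ G.Edge u t → ∃ v, G.Edge u v ∧ 2 * w u ≤ w v)
    (c : V → ℕ) (hc : (∑ v, w v) < ∑ v, w v * (c v : NNRat)) :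
    G.Solvable 1 t c := by
  exact wfl_aux G hw2 t w hwt hwf (∑ v, c v) c rfl hc
end

section
/- For every n ≥ 1, the pebbling number of the even cycle on 2n vertices with all edge weights 2 satisfies π(C_{2n}^(2)) = 2^n. -/
open Finset

-- auxiliary development
open Fin.NatCast Fin.CommRing
namespace CyclePebbling

abbrev CG (N : ℕ) : EWDigraph (Fin N) := (SimpleGraph.cycleGraph N).toEW 2 (le_refl 2)

variable {N : ℕ}

lemma edge_iff {u v : Fin N} : (CG N).Edge u v ↔ ((u - v).val = 1 ∨ (v - u).val = 1) :=
  SimpleGraph.cycleGraph_adj'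

lemma edge_ne {u v : Fin N} (h : (CG N).Edge u v) : u ≠ v :=
  (show (SimpleGraph.cycleGraph N).Adj u v from h).ne

lemma move_many {u v : Fin N} (h : (CG N).Edge u v) :
    ∀ (q : ℕ) (c : Fin N → ℕ), 2 * q ≤ c u →
      Relation.ReflTransGen (CG N).Step c
        (fun w => if w = u then c u - 2 * q else if w = v then c v + q else c w) := by
  have hne := edge_ne h
  intro q
  induction q with
  | zero =>
    intro c _
    have : (fun w => if w = u then c u - 2 * 0 else if w = v then c v + 0 else c w) = c := by
      funext w
      split_ifs with h1 h2 <;> simp_all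
    rw [this]
  | succ q ih =>
    intro c hc
    set c₁ : Fin N → ℕ :=
      fun w => if w = u then c u - 2 else if w = v then c v + 1 else c w with hc₁
    have hw : (CG N).weight u v = 2 := rfl
    have hstep : (CG N).Step c c₁ := ⟨u, v, h, by rw [hw]; omega, by rw [hw]⟩
    have h1 : c₁ u = c u - 2 := by simp [hc₁]
    have h2 : c₁ v = c v + 1 := by simp [hc₁, hne.symm]
    have := ih c₁ (by omega)
    have heq : (fun w => if w = u then c₁ u - 2 * q else if w = v then c₁ v + q else c₁ w)
        = (fun w => if w = u then c u - 2 * (q + 1) else if w = v then c v + (q + 1) else c w) := by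
      funext w
      by_cases hw : w = u
      · simp [hw, h1]; omega
      · by_cases hw' : w = v
        · simp [hw, hw', h2, hne.symm]; omega
        · simp [hc₁, hw, hw']
    rw [heq] at this
    exact Relation.ReflTransGen.head hstep this

lemma solvable_trans {c c₁ : Fin N → ℕ} {t : Fin N}
    (h : Relation.ReflTransGen (CG N).Step c c₁) (hs : (CG N).Solvable 1 t c₁) :
    (CG N).Solvable 1 t c := by
  obtain ⟨c', h', ht⟩ := hs
  exact ⟨c', h.trans h', ht⟩

lemma greedy (f : ℕ → Fin N) (hadj : ∀ j, (CG N).Edge (f (j + 1)) (f j)) :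
    ∀ (m : ℕ) (c : Fin N → ℕ),
      (∀ j₁ j₂, j₁ ≤ m → j₂ ≤ m → f j₁ = f j₂ → j₁ = j₂) →
      2 ^ m ≤ ∑ j ∈ Finset.range (m + 1), c (f j) * 2 ^ (m - j) →
      (CG N).Solvable 1 (f 0) c := by
  intro m
  induction m with
  | zero =>
    intro c _ hsum
    simp at hsum
    exact ⟨c, Relation.ReflTransGen.refl, hsum⟩
  | succ m ih =>
    intro c hinj hsum
    set u := f (m + 1) with hu
    set v := f m with hv
    have hne : u ≠ v := fun he => by
      have := hinj (m + 1) m (le_refl _) (by omega) he; omega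
    set q := c u / 2 with hq
    have hcu : 2 * q ≤ c u := by
      rw [hq, mul_comm]; exact Nat.div_mul_le_self _ _
    set c₁ : Fin N → ℕ :=
      (fun w => if w = u then c u - 2 * q else if w = v then c v + q else c w) with hc₁
    have hmove := move_many (hadj m) q c hcu
    apply solvable_trans hmove
    apply ih c₁ (fun j₁ j₂ h₁ h₂ he => hinj j₁ j₂ (by omega) (by omega) he)
    -- now the sum bound
    have hfu : ∀ j, j ≤ m → f j ≠ u := fun j hj he => by
      have := hinj j (m + 1) (by omega) (le_refl _) he; omega
    have hfv : ∀ j, j < m → f j ≠ v := fun j hj he => by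
      have := hinj j m (by omega) (by omega) he; omega
    have hsum1 : ∑ j ∈ Finset.range (m + 1), c₁ (f j) * 2 ^ (m - j)
        = (∑ j ∈ Finset.range m, c (f j) * 2 ^ (m - j)) + (c v + q) := by
      rw [Finset.sum_range_succ]
      have h1 : c₁ (f m) = c v + q := by
        simp [hc₁, hfu m (le_refl m), ← hv, hne.symm]
      have h2 : ∀ j ∈ Finset.range m, c₁ (f j) * 2 ^ (m - j) = c (f j) * 2 ^ (m - j) := by
        intro j hj
        rw [Finset.mem_range] at hj
        have := hfu j (by omega)
        have := hfv j hj
        have a1 : f j ≠ f (m + 1) := hfu j (by omega)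
        have a2 : f j ≠ f m := hfv j hj
        simp only [hc₁, if_neg a1, if_neg a2, if_neg (hfu j (by omega)), if_neg (hfv j hj)]
      rw [Finset.sum_congr rfl h2, h1]
      simp
    have hsum2 : ∑ j ∈ Finset.range (m + 2), c (f j) * 2 ^ (m + 1 - j)
        = 2 * (∑ j ∈ Finset.range m, c (f j) * 2 ^ (m - j)) + 2 * c v + c u := by
      rw [Finset.sum_range_succ, Finset.sum_range_succ]
      have h2 : ∀ j ∈ Finset.range m, c (f j) * 2 ^ (m + 1 - j) = 2 * (c (f j) * 2 ^ (m - j)) := by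
        intro j hj
        rw [Finset.mem_range] at hj
        have : m + 1 - j = (m - j) + 1 := by omega
        rw [this, pow_succ]; ring
      rw [Finset.sum_congr rfl h2, ← Finset.mul_sum]
      simp [← hu, ← hv]
      ring
    rw [hsum2] at hsum
    have hq2 : c u ≤ 2 * q + 1 := by
      have := Nat.div_add_mod (c u) 2
      have := Nat.mod_lt (c u) (y := 2) (by norm_num)
      omega
    rw [hsum1]
    have hpow : 2 ^ (m + 1) = 2 * 2 ^ m := by rw [pow_succ]; ring
    omega

lemma cast_inj_aux [NeZero N] {j₁ j₂ : ℕ} (h₁ : j₁ < N) (h₂ : j₂ < N)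
    (h : (j₁ : Fin N) = (j₂ : Fin N)) : j₁ = j₂ := by
  have := congrArg Fin.val h
  rwa [Fin.val_natCast, Fin.val_natCast, Nat.mod_eq_of_lt h₁, Nat.mod_eq_of_lt h₂] at this

lemma one_val [NeZero N] (hN : 2 ≤ N) : (1 : Fin N).val = 1 := by
  rw [Fin.val_one']
  exact Nat.mod_eq_of_lt (by omega)

lemma adj_succ [NeZero N] (hN : 2 ≤ N) (t : Fin N) (j : ℕ) :
    (CG N).Edge (t + (↑(j + 1) : Fin N)) (t + ↑j) := by
  rw [edge_iff]
  left
  have : (t + (↑(j + 1) : Fin N)) - (t + ↑j) = 1 := by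
    push_cast
    ring
  rw [this, one_val hN]

lemma adj_pred [NeZero N] (hN : 2 ≤ N) (t : Fin N) (j : ℕ) :
    (CG N).Edge (t - (↑(j + 1) : Fin N)) (t - ↑j) := by
  rw [edge_iff]
  right
  have : (t - (↑j : Fin N)) - (t - ↑(j + 1)) = 1 := by
    push_cast
    ring
  rw [this, one_val hN]

lemma pow_two_add (a b d : ℕ) (h : a + b = 2 * d) : 2 ^ (d + 1) ≤ 2 ^ a + 2 ^ b := by
  rcases le_total a b with hab | hab
  · rcases Nat.lt_or_ge b (d + 1) with hb | hb
    · have ha : a = d := by omega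
      have hb' : b = d := by omega
      subst ha; subst hb'
      rw [pow_succ]; omega
    · calc 2 ^ (d + 1) ≤ 2 ^ b := Nat.pow_le_pow_right (by norm_num) hb
        _ ≤ 2 ^ a + 2 ^ b := Nat.le_add_left _ _
  · rcases Nat.lt_or_ge a (d + 1) with ha | ha
    · have ha' : a = d := by omega
      have hb' : b = d := by omega
      subst ha'; subst hb'
      rw [pow_succ]; omega
    · calc 2 ^ (d + 1) ≤ 2 ^ a := Nat.pow_le_pow_right (by norm_num) ha
        _ ≤ 2 ^ a + 2 ^ b := Nat.le_add_right _ _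


lemma neg_cast [NeZero N] {j : ℕ} (hj : j ≤ N) : ((N - j : ℕ) : Fin N) = -(j : Fin N) := by
  apply eq_neg_of_add_eq_zero_left
  have : ((N - j : ℕ) : Fin N) + (j : Fin N) = ((N - j + j : ℕ) : Fin N) := by push_cast; ring
  rw [this, Nat.sub_add_cancel hj, Fin.natCast_self]

lemma reindex [NeZero N] (hN : 2 ≤ N) (t : Fin N) (c : Fin N → ℕ) :
    ∑ j ∈ Finset.range N, c (t - ↑j) * 2 ^ (N - 1 - j)
      = ∑ j ∈ Finset.range N, c (t + ↑j) * (if j = 0 then 2 ^ (N - 1) else 2 ^ (j - 1)) := by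
  apply Finset.sum_nbij' (fun j => (N - j) % N) (fun j => (N - j) % N)
  · intro a ha
    rw [Finset.mem_range] at *
    exact Nat.mod_lt _ (by omega)
  · intro a ha
    rw [Finset.mem_range] at *
    exact Nat.mod_lt _ (by omega)
  · intro a ha
    rw [Finset.mem_range] at ha
    rcases Nat.eq_zero_or_pos a with h0 | h0
    · simp [h0, Nat.mod_self]
    · rw [Nat.mod_eq_of_lt (show N - a < N by omega),
        Nat.sub_sub_self (show a ≤ N by omega), Nat.mod_eq_of_lt (by omega)]
  · intro a ha
    rw [Finset.mem_range] at ha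
    rcases Nat.eq_zero_or_pos a with h0 | h0
    · simp [h0, Nat.mod_self]
    · rw [Nat.mod_eq_of_lt (show N - a < N by omega),
        Nat.sub_sub_self (show a ≤ N by omega), Nat.mod_eq_of_lt (by omega)]
  · intro a ha
    rw [Finset.mem_range] at ha
    rcases Nat.eq_zero_or_pos a with h0 | h0
    · simp [h0, Nat.mod_self]
    · rw [Nat.mod_eq_of_lt (show N - a < N by omega), if_neg (by omega),
        neg_cast (show a ≤ N by omega), ← sub_eq_add_neg,
        show N - a - 1 = N - 1 - a from by omega]

lemma upper (n : ℕ) (hn : 1 ≤ n) (t : Fin (2 * n)) (c : Fin (2 * n) → ℕ)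
    (hc : 2 ^ n ≤ ∑ v, c v) : (CG (2 * n)).Solvable 1 t c := by
  haveI : NeZero (2 * n) := ⟨by omega⟩
  by_contra hns
  have hN : 2 ≤ 2 * n := by omega
  have key : ∀ f : ℕ → Fin (2 * n), f 0 = t → (∀ j, (CG (2 * n)).Edge (f (j + 1)) (f j)) →
      (∀ j₁ j₂, j₁ ≤ 2 * n - 1 → j₂ ≤ 2 * n - 1 → f j₁ = f j₂ → j₁ = j₂) →
      ∑ j ∈ Finset.range (2 * n), c (f j) * 2 ^ (2 * n - 1 - j) ≤ 2 ^ (2 * n - 1) - 1 := by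
    intro f h0 hadj hinj
    by_contra hbig
    push_neg at hbig
    have h2 : 2 ^ (2 * n - 1)
        ≤ ∑ j ∈ Finset.range ((2 * n - 1) + 1), c (f j) * 2 ^ (2 * n - 1 - j) := by
      rw [show (2 * n - 1) + 1 = 2 * n by omega]; omega
    have := greedy f hadj (2 * n - 1) c hinj h2
    rw [h0] at this
    exact hns this
  have hS₁ := key (fun j => t + ↑j) (by simp) (fun j => adj_succ hN t j)
      (fun j₁ j₂ h₁ h₂ he => by
        exact cast_inj_aux (by omega) (by omega) (add_left_cancel he))
  have hS₂ := key (fun j => t - ↑j) (by simp) (fun j => adj_pred hN t j)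
      (fun j₁ j₂ h₁ h₂ he => by
        exact cast_inj_aux (by omega) (by omega) (sub_right_inj.mp he))
  rw [reindex hN t c] at hS₂
  have hcoef : ∀ j ∈ Finset.range (2 * n),
      c (t + ↑j) * 2 ^ n ≤ c (t + ↑j) * 2 ^ (2 * n - 1 - j)
        + c (t + ↑j) * (if j = 0 then 2 ^ (2 * n - 1) else 2 ^ (j - 1)) := by
    intro j hj
    rw [Finset.mem_range] at hj
    rw [← Nat.mul_add]
    apply Nat.mul_le_mul_left
    rcases Nat.eq_zero_or_pos j with h0 | h0
    · rw [if_pos h0]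
      subst h0
      simp only [Nat.sub_zero]
      have : 2 ^ n ≤ 2 ^ (2 * n - 1) := Nat.pow_le_pow_right (by norm_num) (by omega)
      have : 1 ≤ 2 ^ (2 * n - 1) := Nat.one_le_two_pow
      omega
    · rw [if_neg (by omega)]
      have := pow_two_add (2 * n - 1 - j) (j - 1) (n - 1) (by omega)
      rw [show (n - 1) + 1 = n by omega] at this
      exact this
  have hsum : ∑ j ∈ Finset.range (2 * n), c (t + ↑j) * 2 ^ n
      ≤ (∑ j ∈ Finset.range (2 * n), c (t + ↑j) * 2 ^ (2 * n - 1 - j))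
        + ∑ j ∈ Finset.range (2 * n),
            c (t + ↑j) * (if j = 0 then 2 ^ (2 * n - 1) else 2 ^ (j - 1)) := by
    rw [← Finset.sum_add_distrib]
    exact Finset.sum_le_sum hcoef
  have htot : ∑ j ∈ Finset.range (2 * n), c (t + ↑j) = ∑ v, c v := by
    rw [← Fin.sum_univ_eq_sum_range (fun j => c (t + (j : Fin (2 * n)))) (2 * n)]
    simp only [Fin.cast_val_eq_self]
    exact Fintype.sum_equiv (Equiv.addLeft t) _ _ (fun i => rfl)
  rw [← Finset.sum_mul, htot] at hsum
  have hNN : 2 ^ (2 * n - 1) + 2 ^ (2 * n - 1) = 2 ^ n * 2 ^ n := by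
    rw [← pow_add, ← two_mul, ← pow_succ']
    congr 1
    omega
  have h1 : 1 ≤ 2 ^ (2 * n - 1) := Nat.one_le_two_pow
  have h2 : 2 ^ n * 2 ^ n ≤ (∑ v, c v) * 2 ^ n :=
    Nat.mul_le_mul_right _ hc
  omega


def dW (n : ℕ) (v : Fin (2 * n)) : ℕ := 2 ^ (n - min v.val (2 * n - v.val))

def Phi (n : ℕ) (c : Fin (2 * n) → ℕ) : ℕ := ∑ v, c v * dW n v

lemma adj_dW {n : ℕ} (hn : 1 ≤ n) {u v : Fin (2 * n)} (h : (CG (2 * n)).Edge u v) :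
    dW n v ≤ 2 * dW n u := by
  have hu := u.isLt
  have hv := v.isLt
  have hd : min u.val (2 * n - u.val) ≤ min v.val (2 * n - v.val) + 1 := by
    rw [edge_iff] at h
    have hsub : ∀ a b : Fin (2 * n), (a - b).val = (a.val + (2 * n - b.val)) % (2 * n) := by
      intro a b; simp [Fin.sub_def, Nat.add_comm]
    rcases h with h | h
    · rw [hsub] at h
      rcases Nat.lt_or_ge (u.val + (2 * n - v.val)) (2 * n) with hc | hc
      · rw [Nat.mod_eq_of_lt hc] at h; omega
      · rw [Nat.mod_eq_sub_mod hc, Nat.mod_eq_of_lt (by omega)] at h; omega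
    · rw [hsub] at h
      rcases Nat.lt_or_ge (v.val + (2 * n - u.val)) (2 * n) with hc | hc
      · rw [Nat.mod_eq_of_lt hc] at h; omega
      · rw [Nat.mod_eq_sub_mod hc, Nat.mod_eq_of_lt (by omega)] at h; omega
  unfold dW
  rw [← pow_succ']
  exact Nat.pow_le_pow_right (by norm_num) (by omega)

lemma step_phi {n : ℕ} (hn : 1 ≤ n) {c₁ c₂ : Fin (2 * n) → ℕ}
    (h : (CG (2 * n)).Step c₁ c₂) : Phi n c₂ ≤ Phi n c₁ := by
  obtain ⟨u, v, hE, hcu, hc₂⟩ := h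
  have hw : (CG (2 * n)).weight u v = 2 := rfl
  rw [hw] at hcu hc₂
  have hne : u ≠ v := edge_ne hE
  have hb := adj_dW hn hE
  have key : ∀ g : Fin (2 * n) → ℕ, ∑ x, g x
      = g u + (g v + ∑ x ∈ (Finset.univ.erase u).erase v, g x) := by
    intro g
    rw [Finset.add_sum_erase _ g (Finset.mem_erase.mpr ⟨hne.symm, Finset.mem_univ v⟩),
      Finset.add_sum_erase _ g (Finset.mem_univ u)]
  unfold Phi
  rw [key (fun x => c₁ x * dW n x), key (fun x => c₂ x * dW n x)]
  have h1 : c₂ u = c₁ u - 2 := by rw [hc₂]; simp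
  have h2 : c₂ v = c₁ v + 1 := by rw [hc₂]; simp [hne.symm]
  have h3 : ∑ x ∈ (Finset.univ.erase u).erase v, c₂ x * dW n x
      = ∑ x ∈ (Finset.univ.erase u).erase v, c₁ x * dW n x := by
    apply Finset.sum_congr rfl
    intro x hx
    rw [Finset.mem_erase, Finset.mem_erase] at hx
    rw [hc₂]
    simp [hx.1, hx.2.1]
  rw [h1, h2, h3]
  have hka : (c₁ u - 2) * dW n u + 2 * dW n u = c₁ u * dW n u := by
    rw [← Nat.add_mul, Nat.sub_add_cancel hcu]
  calc (c₁ u - 2) * dW n u + ((c₁ v + 1) * dW n v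
        + ∑ x ∈ (Finset.univ.erase u).erase v, c₁ x * dW n x)
      = ((c₁ u - 2) * dW n u + dW n v)
        + (c₁ v * dW n v + ∑ x ∈ (Finset.univ.erase u).erase v, c₁ x * dW n x) := by ring
    _ ≤ ((c₁ u - 2) * dW n u + 2 * dW n u)
        + (c₁ v * dW n v + ∑ x ∈ (Finset.univ.erase u).erase v, c₁ x * dW n x) := by
        exact Nat.add_le_add_right (Nat.add_le_add_left hb _) _
    _ = c₁ u * dW n u + (c₁ v * dW n v
        + ∑ x ∈ (Finset.univ.erase u).erase v, c₁ x * dW n x) := by rw [hka]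

lemma phi_mono {n : ℕ} (hn : 1 ≤ n) {c c' : Fin (2 * n) → ℕ}
    (h : Relation.ReflTransGen (CG (2 * n)).Step c c') : Phi n c' ≤ Phi n c := by
  induction h with
  | refl => exact le_refl _
  | tail _ hstep ih => exact le_trans (step_phi hn hstep) ih

lemma lower (n : ℕ) [NeZero (2 * n)] (hn : 1 ≤ n) :
    ¬ (CG (2 * n)).Solvable 1 0 (fun v => if v = (↑n : Fin (2 * n)) then 2 ^ n - 1 else 0) := by
  rintro ⟨c', hrtg, h1⟩
  have hmono := phi_mono hn hrtg
  have hval : ((↑n : Fin (2 * n))).val = n := by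
    rw [Fin.val_natCast]; exact Nat.mod_eq_of_lt (by omega)
  have hPhi0 : Phi n (fun v => if v = (↑n : Fin (2 * n)) then 2 ^ n - 1 else 0) = 2 ^ n - 1 := by
    unfold Phi
    rw [Finset.sum_eq_single (↑n : Fin (2 * n))]
    · have hv1 : (fun v => if v = (↑n : Fin (2 * n)) then 2 ^ n - 1 else 0)
          (↑n : Fin (2 * n)) = 2 ^ n - 1 := by simp
      rw [hv1]
      unfold dW
      rw [hval, show n - min n (2 * n - n) = 0 by omega]
      simp
    · intro b _ hb; simp [hb]
    · intro hb; exact absurd (Finset.mem_univ _) hb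
  have hzval : ((0 : Fin (2 * n))).val = 0 := by simp
  have hw0 : dW n (0 : Fin (2 * n)) = 2 ^ n := by
    unfold dW
    rw [hzval]
    simp
  have hlow : 2 ^ n ≤ Phi n c' := by
    have hmul : 2 ^ n ≤ c' 0 * dW n 0 := by
      rw [← hw0]
      exact Nat.le_mul_of_pos_left _ (by omega)
    have hs : c' 0 * dW n 0 ≤ ∑ v, c' v * dW n v :=
      Finset.single_le_sum (f := fun v => c' v * dW n v)
        (fun i _ => Nat.zero_le _) (Finset.mem_univ _)
    unfold Phi
    exact le_trans hmul hs
  have hpos : 1 ≤ 2 ^ n := Nat.one_le_two_pow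
  omega

end CyclePebbling


/-- For `n ≥ 1`, `π(C_{2n}^(2)) = 2 ^ n`. -/
theorem stmt_4 (n : ℕ) (hn : 1 ≤ n) :
    ((SimpleGraph.cycleGraph (2 * n)).toEW 2 (le_refl 2)).piMax = 2 ^ n := by
  haveI : NeZero (2 * n) := ⟨by omega⟩
  have hub : ∀ t, (CyclePebbling.CG (2 * n)).PiBound 1 t (2 ^ n) :=
    fun t c hc => CyclePebbling.upper n hn t c hc
  have hle : ∀ t, (CyclePebbling.CG (2 * n)).pi 1 t ≤ 2 ^ n :=
    fun t => Nat.sInf_le (hub t)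
  have hge : 2 ^ n ≤ (CyclePebbling.CG (2 * n)).pi 1 0 := by
    by_contra h
    push_neg at h
    have hne : {p | (CyclePebbling.CG (2 * n)).PiBound 1 0 p}.Nonempty := ⟨2 ^ n, hub 0⟩
    have hmem := Nat.sInf_mem hne
    have hsize : (CyclePebbling.CG (2 * n)).pi 1 0 ≤
        ∑ v, (fun v => if v = (↑n : Fin (2 * n)) then 2 ^ n - 1 else 0) v := by
      have hsum : ∑ v, (fun v => if v = (↑n : Fin (2 * n)) then 2 ^ n - 1 else 0) v
          = 2 ^ n - 1 := by simp
      rw [hsum]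
      have h1 := Nat.one_le_two_pow (n := n)
      unfold EWDigraph.pi at h ⊢
      omega
    exact CyclePebbling.lower n hn (hmem _ hsize)
  unfold EWDigraph.piMax
  apply le_antisymm
  · exact Finset.sup_le fun t _ => hle t
  · exact le_trans hge (Finset.le_sup (Finset.mem_univ (0 : Fin (2 * n))))
end

section
/- For every n ≥ 1, the pebbling number of the odd cycle on 2n+1 vertices with all edge weights 2 satisfies π(C_{2n+1}^(2)) = 2·⌊2^{n+1}/3⌋ + 1. -/
open Finset

namespace PebAux

open Fin.NatCast Fin.CommRing

def gvalN (c : ℕ → ℕ) : ℕ → ℕ → ℕ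
  | _, 0 => 0
  | i, len+1 => c i + gvalN c (i+1) len / 2

@[simp] lemma gvalN_zero (c : ℕ → ℕ) (i : ℕ) : gvalN c i 0 = 0 := rfl

lemma gvalN_succ (c : ℕ → ℕ) (i len : ℕ) :
    gvalN c i (len+1) = c i + gvalN c (i+1) len / 2 := rfl

lemma gvalN_congr {c c' : ℕ → ℕ} : ∀ (len i : ℕ),
    (∀ k, i ≤ k → k < i + len → c k = c' k) → gvalN c i len = gvalN c' i len := by
  intro len
  induction len with
  | zero => intro i _; rfl
  | succ len ih =>
    intro i h
    rw [gvalN_succ, gvalN_succ, h i le_rfl (by omega),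
      ih (i+1) (fun k hk1 hk2 => h k (by omega) (by omega))]

lemma gvalN_mono {c c' : ℕ → ℕ} : ∀ (len i : ℕ),
    (∀ k, i ≤ k → k < i + len → c k ≤ c' k) → gvalN c i len ≤ gvalN c' i len := by
  intro len
  induction len with
  | zero => intro i _; simp
  | succ len ih =>
    intro i h
    rw [gvalN_succ, gvalN_succ]
    exact Nat.add_le_add (h i le_rfl (by omega))
      (Nat.div_le_div_right (ih (i+1) (fun k hk1 hk2 => h k (by omega) (by omega))))

lemma le_gvalN (c : ℕ → ℕ) (i len : ℕ) (h : 1 ≤ len) : c i ≤ gvalN c i len := by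
  obtain ⟨len', rfl⟩ : ∃ l, len = l + 1 := ⟨len - 1, by omega⟩
  rw [gvalN_succ]; omega

/-- moving a pebble from `j+1` to `j` (toward the left end) does not increase
the greedy value. -/
lemma gvalN_moveLeft {c c' : ℕ → ℕ} : ∀ (len i j : ℕ), i ≤ j → j + 1 < i + len →
    2 ≤ c (j+1) → c' j = c j + 1 → c' (j+1) = c (j+1) - 2 →
    (∀ k, i ≤ k → k < i + len → k ≠ j → k ≠ j+1 → c' k = c k) →
    gvalN c' i len ≤ gvalN c i len := by
  intro len
  induction len with
  | zero => intro i j h1 h2 _ _ _ _; omega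
  | succ len ih =>
    intro i j hij hlen h2 hcj hcj1 hother
    rcases Nat.lt_or_ge i j with hlt | hge
    · rw [gvalN_succ, gvalN_succ, hother i le_rfl (by omega) (by omega) (by omega)]
      exact Nat.add_le_add_left (Nat.div_le_div_right
        (ih (i+1) j (by omega) (by omega) h2 hcj hcj1
          (fun k hk1 hk2 hk3 hk4 => hother k (by omega) (by omega) hk3 hk4))) _
    · have hij' : i = j := le_antisymm hij hge
      subst hij'
      -- len ≥ 1
      obtain ⟨len', rfl⟩ : ∃ l, len = l + 1 := ⟨len - 1, by omega⟩
      rw [gvalN_succ, gvalN_succ, hcj]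
      rw [gvalN_succ, gvalN_succ, hcj1]
      have htail : gvalN c' (i+1+1) len' = gvalN c (i+1+1) len' :=
        gvalN_congr len' (i+1+1) (fun k hk1 hk2 => hother k (by omega) (by omega) (by omega) (by omega))
      rw [htail]
      omega

/-- moving a pebble from `j` to `j+1` (away from the left end) does not increase
the greedy value. -/
lemma gvalN_moveRight {c c' : ℕ → ℕ} : ∀ (len i j : ℕ), i ≤ j → j + 1 < i + len →
    2 ≤ c j → c' j = c j - 2 → c' (j+1) = c (j+1) + 1 →
    (∀ k, i ≤ k → k < i + len → k ≠ j → k ≠ j+1 → c' k = c k) →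
    gvalN c' i len ≤ gvalN c i len := by
  intro len
  induction len with
  | zero => intro i j h1 h2 _ _ _ _; omega
  | succ len ih =>
    intro i j hij hlen h2 hcj hcj1 hother
    rcases Nat.lt_or_ge i j with hlt | hge
    · rw [gvalN_succ, gvalN_succ, hother i le_rfl (by omega) (by omega) (by omega)]
      exact Nat.add_le_add_left (Nat.div_le_div_right
        (ih (i+1) j (by omega) (by omega) h2 hcj hcj1
          (fun k hk1 hk2 hk3 hk4 => hother k (by omega) (by omega) hk3 hk4))) _
    · have hij' : i = j := le_antisymm hij hge
      subst hij'
      obtain ⟨len', rfl⟩ : ∃ l, len = l + 1 := ⟨len - 1, by omega⟩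
      rw [gvalN_succ, gvalN_succ, hcj]
      rw [gvalN_succ, gvalN_succ, hcj1]
      have htail : gvalN c' (i+1+1) len' = gvalN c (i+1+1) len' :=
        gvalN_congr len' (i+1+1) (fun k hk1 hk2 => hother k (by omega) (by omega) (by omega) (by omega))
      rw [htail]
      omega

/-- weighted-sum bound coming from the greedy value. -/
lemma gvalN_weight (c : ℕ → ℕ) : ∀ (len i : ℕ),
    (∑ k ∈ Finset.range (len+1), c (i+k) * 2^(len-k)) + 1 ≤ 2^len * (gvalN c i (len+1) + 1) := by
  intro len
  induction len with
  | zero => intro i; simp [gvalN_succ]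
  | succ len ih =>
    intro i
    have hsplit : (∑ k ∈ Finset.range (len+2), c (i+k) * 2^(len+1-k))
        = (∑ k ∈ Finset.range (len+1), c (i+1+k) * 2^(len-k)) + c i * 2^(len+1) := by
      rw [Finset.sum_range_succ' (fun k => c (i+k) * 2^(len+1-k)) (len+1)]
      congr 1
      apply Finset.sum_congr rfl
      intro k hk
      have h2 : len + 1 - (k+1) = len - k := by omega
      have h3 : i + (k+1) = i + 1 + k := by omega
      rw [h3, h2]
    rw [hsplit, gvalN_succ]
    have h1 := ih (i+1)
    have hg : gvalN c (i+1) (len+1) + 1 ≤ 2 * (gvalN c (i+1) (len+1) / 2 + 1) := by omega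
    calc (∑ k ∈ Finset.range (len+1), c (i+1+k) * 2^(len-k)) + c i * 2^(len+1) + 1
        ≤ 2^len * (gvalN c (i+1) (len+1) + 1) + c i * 2^(len+1) := by omega
      _ ≤ 2^len * (2 * (gvalN c (i+1) (len+1) / 2 + 1)) + c i * 2^(len+1) :=
          Nat.add_le_add_right (Nat.mul_le_mul_left _ hg) _
      _ = 2^(len+1) * ((gvalN c (i+1) (len+1) / 2 + 1)) + c i * 2^(len+1) := by ring
      _ = 2^(len+1) * (c i + gvalN c (i+1) (len+1) / 2 + 1) := by ring




lemma c1 (p a r S W : ℕ) (h1 : 3*a + r = 4*p) (hr : r ≤ 2)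
    (hk : S*(3*p) ≤ W) (hW : W + 2 ≤ 8*(p*p)) (hS : 2*a+2 ≤ S) : False := by nlinarith

lemma c2 (p a S W : ℕ) (h1 : 3*a + 1 = 4*p) (hp : 1 ≤ p)
    (hk : S*(3*p) ≤ W) (hW : W + 2 ≤ 8*(p*p)) (hS : S = 2*a+1) : False := by nlinarith

lemma c3 (p D E W : ℕ) (h3S : 3*(D+E) + 1 = 8*p) (hp : 1 ≤ p)
    (hW : W + 2 ≤ 8*(p*p)) (hWlo : D*(3*p) + E*(4*p) ≤ W) (hE : 1 ≤ E) : False := by nlinarith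

lemma c4 (p e1 e2 S : ℕ) (h3S : 3*S + 1 = 8*p) (hsum : e1 + e2 = S) (hp : 1 ≤ p)
    (hA : e1*(2*p) + e2*p + 1 ≤ 4*(p*p)) (hB : e1*p + e2*(2*p) + 1 ≤ 4*(p*p)) : False := by
  have h1 : (2*e1 + e2) * p < (4*p) * p := by nlinarith
  have h2 : (e1 + 2*e2) * p < (4*p) * p := by nlinarith
  have h1' : 2*e1 + e2 < 4*p := lt_of_mul_lt_mul_right h1 (Nat.zero_le p)
  have h2' : e1 + 2*e2 < 4*p := lt_of_mul_lt_mul_right h2 (Nat.zero_le p)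
  omega

lemma arith_core (n : ℕ) (hn : 1 ≤ n) (e : ℕ → ℕ)
    (H1 : ∑ k ∈ Finset.range (2*n), e k * 2^(2*n-1-k) ≤ 2^(2*n) - 1)
    (H2 : ∑ k ∈ Finset.range (2*n), e k * 2^k ≤ 2^(2*n) - 1) :
    ∑ k ∈ Finset.range (2*n), e k ≤ 2 * (2^(n+1)/3) := by
  obtain ⟨n', rfl⟩ : ∃ l, n = l + 1 := ⟨n - 1, by omega⟩
  set n := n' + 1 with hn'
  set p := 2^n' with hpdef
  have hp : 1 ≤ p := Nat.one_le_two_pow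
  have h2p : 2^(n'+1) = 2*p := by rw [pow_succ]; ring
  have h4p : 2^(n'+2) = 4*p := by rw [pow_add]; ring
  have hQ : 2^(2*n) = 4*(p*p) := by
    have h : 2*n = n' + (n' + 2) := by omega
    rw [h, pow_add, h4p]; ring
  have hQ1 : 1 ≤ 4*(p*p) := by nlinarith
  -- pointwise weight bound
  have hw : ∀ k, k < 2*n → 3*p ≤ 2^(2*n-1-k) + 2^k := by
    intro k hk
    have hx1 : 1 ≤ 2^k := Nat.one_le_two_pow
    have hx2 : 1 ≤ 2^(2*n-1-k) := Nat.one_le_two_pow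
    rcases Nat.lt_or_ge k n' with h1 | h1
    · have hex : n'+2 ≤ 2*n-1-k := by omega
      have := Nat.pow_le_pow_right (by norm_num : 1 ≤ 2) hex
      omega
    rcases Nat.eq_or_lt_of_le h1 with h2 | h2
    · have hex : 2*n-1-k = n'+1 := by omega
      rw [hex, h2p, ← h2, ← hpdef]
      omega
    rcases Nat.eq_or_lt_of_le h2 with h3 | h3
    · have hex : 2*n-1-k = n' := by omega
      rw [hex, ← h3, ← hpdef, h2p]
      omega
    · have hex : n'+2 ≤ k := by omega
      have := Nat.pow_le_pow_right (by norm_num : 1 ≤ 2) hex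
      omega
  have hw4 : ∀ k, k < 2*n → k ≠ n' → k ≠ n'+1 → 4*p ≤ 2^(2*n-1-k) + 2^k := by
    intro k hk hk1 hk2
    have hx1 : 1 ≤ 2^k := Nat.one_le_two_pow
    have hx2 : 1 ≤ 2^(2*n-1-k) := Nat.one_le_two_pow
    rcases Nat.lt_or_ge k n' with h1 | h1
    · have hex : n'+2 ≤ 2*n-1-k := by omega
      have := Nat.pow_le_pow_right (by norm_num : 1 ≤ 2) hex
      omega
    · have hex : n'+2 ≤ k := by omega
      have := Nat.pow_le_pow_right (by norm_num : 1 ≤ 2) hex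
      omega
  set S := ∑ k ∈ Finset.range (2*n), e k with hSdef
  set W := ∑ k ∈ Finset.range (2*n), e k * (2^(2*n-1-k) + 2^k) with hWdef
  have hWsplit : W = (∑ k ∈ Finset.range (2*n), e k * 2^(2*n-1-k))
      + (∑ k ∈ Finset.range (2*n), e k * 2^k) := by
    rw [hWdef, ← Finset.sum_add_distrib]
    exact Finset.sum_congr rfl (fun k _ => by ring)
  have hW2 : W + 2 ≤ 8*(p*p) := by
    have : W ≤ (2^(2*n) - 1) + (2^(2*n) - 1) := by rw [hWsplit]; omega
    omega
  have hk : S*(3*p) ≤ W := by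
    rw [hSdef, Finset.sum_mul]
    exact Finset.sum_le_sum (fun k hk' => Nat.mul_le_mul_left _ (hw k (Finset.mem_range.mp hk')))
  -- division facts
  set a := 2^(n+1)/3 with hadef
  set r := 2^(n+1) % 3 with hrdef
  have hdm : 3*a + r = 2^(n+1) := by rw [hadef, hrdef]; omega
  have hr3 : r < 3 := Nat.mod_lt _ (by norm_num)
  have hr0 : r ≠ 0 := by
    intro h0
    have hdvd : 3 ∣ 2^(n+1) := by
      rw [hrdef] at h0; exact Nat.dvd_of_mod_eq_zero h0
    have := Nat.Prime.dvd_of_dvd_pow Nat.prime_three hdvd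
    omega
  have h4p' : 2^(n+1) = 4*p := by
    have : n + 1 = n' + 2 := by omega
    rw [this, h4p]
  have h1 : 3*a + r = 4*p := by omega
  -- main case analysis
  by_contra hcon
  have hS1 : 2*a + 1 ≤ S := by omega
  rcases Nat.lt_or_ge S (2*a+2) with hS2 | hS2
  swap
  · exact c1 p a r S W h1 (by omega) hk hW2 hS2
  have hSeq : S = 2*a + 1 := by omega
  rcases Nat.eq_or_lt_of_le (by omega : 1 ≤ r) with hr1 | hr2
  · exact c2 p a S W (by omega) hp hk hW2 hSeq
  have hr2' : r = 2 := by omega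
  have h3S : 3*S + 1 = 8*p := by omega
  -- slack: support is {n', n'+1}
  have hzero : ∀ k, k < 2*n → k ≠ n' → k ≠ n'+1 → e k = 0 := by
    intro k hklt hk1 hk2
    by_contra h0
    have hE : 1 ≤ e k := Nat.pos_of_ne_zero h0
    have hmem : k ∈ Finset.range (2*n) := Finset.mem_range.mpr hklt
    have hW' : (∑ j ∈ (Finset.range (2*n)).erase k, e j * (2^(2*n-1-j) + 2^j))
        + e k * (2^(2*n-1-k) + 2^k) = W :=
      Finset.sum_erase_add _ _ hmem
    have hD : (∑ j ∈ (Finset.range (2*n)).erase k, e j) + e k = S :=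
      Finset.sum_erase_add _ _ hmem
    set D := ∑ j ∈ (Finset.range (2*n)).erase k, e j with hDdef
    have hErLow : D*(3*p) ≤ ∑ j ∈ (Finset.range (2*n)).erase k, e j * (2^(2*n-1-j) + 2^j) := by
      rw [hDdef, Finset.sum_mul]
      exact Finset.sum_le_sum (fun j hj => Nat.mul_le_mul_left _
        (hw j (Finset.mem_range.mp (Finset.mem_of_mem_erase hj))))
    have hEk : (e k)*(4*p) ≤ e k * (2^(2*n-1-k) + 2^k) :=
      Nat.mul_le_mul_left _ (hw4 k hklt hk1 hk2)
    refine c3 p D (e k) W ?_ hp hW2 (by omega) hE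
    omega
  have hsub : ({n', n'+1} : Finset ℕ) ⊆ Finset.range (2*n) := by
    intro x hx
    simp only [Finset.mem_insert, Finset.mem_singleton] at hx
    rcases hx with rfl | rfl <;> exact Finset.mem_range.mpr (by omega)
  have hpairS : e n' + e (n'+1) = S := by
    rw [hSdef, ← Finset.sum_subset hsub (fun x hx hnx => by
      simp only [Finset.mem_insert, Finset.mem_singleton] at hnx
      push_neg at hnx
      exact hzero x (Finset.mem_range.mp hx) hnx.1 hnx.2)]
    rw [Finset.sum_pair (by omega : n' ≠ n'+1)]
  have hA : e n' * (2*p) + e (n'+1) * p + 1 ≤ 4*(p*p) := by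
    have hle : (∑ k ∈ ({n', n'+1} : Finset ℕ), e k * 2^(2*n-1-k))
        ≤ ∑ k ∈ Finset.range (2*n), e k * 2^(2*n-1-k) :=
      Finset.sum_le_sum_of_subset hsub
    rw [Finset.sum_pair (by omega : n' ≠ n'+1)] at hle
    have hex1 : 2*n-1-n' = n'+1 := by omega
    have hex2 : 2*n-1-(n'+1) = n' := by omega
    rw [hex1, hex2, h2p, ← hpdef] at hle
    rw [hQ] at H1
    omega
  have hB : e n' * p + e (n'+1) * (2*p) + 1 ≤ 4*(p*p) := by
    have hle : (∑ k ∈ ({n', n'+1} : Finset ℕ), e k * 2^k)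
        ≤ ∑ k ∈ Finset.range (2*n), e k * 2^k :=
      Finset.sum_le_sum_of_subset hsub
    rw [Finset.sum_pair (by omega : n' ≠ n'+1)] at hle
    rw [h2p, ← hpdef] at hle
    rw [hQ] at H2
    omega
  exact c4 p (e n') (e (n'+1)) S h3S hpairS hp hA hB



-- ### Graph layer
variable {n : ℕ}

def Gr (n : ℕ) : EWDigraph (Fin (2*n+1)) :=
  (SimpleGraph.cycleGraph (2*n+1)).toEW 2 (le_refl 2)

def Lf (n : ℕ) (c : Fin (2*n+1) → ℕ) : ℕ → ℕ := fun k => c ((k : ℕ) : Fin (2*n+1))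

def Lval (n : ℕ) (c : Fin (2*n+1) → ℕ) : ℕ := gvalN (Lf n c) 1 (2*n)

def Rval (n : ℕ) (c : Fin (2*n+1) → ℕ) : ℕ := Lval n (fun v => c (-v))

lemma val_one' (n : ℕ) : (1 : Fin (2*n+1)).val = 1 % (2*n+1) := Fin.val_one' (2*n+1)

lemma val_one (hn : 1 ≤ n) : (1 : Fin (2*n+1)).val = 1 := by
  rw [val_one']; exact Nat.mod_eq_of_lt (by omega)

lemma neg_cast (hn : 1 ≤ n) (k : ℕ) (h1 : 0 < k) (h2 : k < 2*n+1) :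
    (-((k : ℕ) : Fin (2*n+1))) = ((2*n+1-k : ℕ) : Fin (2*n+1)) := by
  have hadd : ((k : ℕ) : Fin (2*n+1)) + ((2*n+1-k : ℕ) : Fin (2*n+1)) = 0 := by
    rw [← Nat.cast_add]
    have h : k + (2*n+1-k) = 2*n+1 := by omega
    rw [h, Fin.natCast_self]
  exact neg_eq_of_add_eq_zero_right hadd

lemma neg_cast_val (hn : 1 ≤ n) (k : ℕ) (h1 : 0 < k) (h2 : k < 2*n+1) :
    (-((k : ℕ) : Fin (2*n+1))).val = 2*n+1-k := by
  rw [neg_cast hn k h1 h2]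
  exact Fin.val_cast_of_lt (by omega)

lemma edge_iff (hn : 1 ≤ n) (u v : Fin (2*n+1)) :
    (Gr n).Edge u v ↔ (u - v = 1 ∨ v - u = 1) := by
  show (SimpleGraph.cycleGraph (2*n+1)).Adj u v ↔ _
  rw [SimpleGraph.cycleGraph_adj']
  constructor
  · rintro (h | h)
    · left; exact Fin.ext (by rw [h, val_one hn])
    · right; exact Fin.ext (by rw [h, val_one hn])
  · rintro (h | h)
    · left; rw [h, val_one hn]
    · right; rw [h, val_one hn]

lemma step_mk (c : Fin (2*n+1) → ℕ) (u v : Fin (2*n+1))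
    (hE : (Gr n).Edge u v) (h2 : 2 ≤ c u) :
    (Gr n).Step c (fun w => if w = u then c u - 2 else if w = v then c v + 1 else c w) :=
  ⟨u, v, hE, h2, rfl⟩

lemma step_comp (σ : Equiv.Perm (Fin (2*n+1)))
    (hadj : ∀ u v, (Gr n).Edge u v → (Gr n).Edge (σ.symm u) (σ.symm v))
    {c₁ c₂ : Fin (2*n+1) → ℕ} (h : (Gr n).Step c₁ c₂) :
    (Gr n).Step (c₁ ∘ σ) (c₂ ∘ σ) := by
  obtain ⟨u, v, hE, h2, rfl⟩ := h
  refine ⟨σ.symm u, σ.symm v, hadj u v hE, ?_, ?_⟩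
  · show (2 : ℕ) ≤ (c₁ ∘ σ) (σ.symm u)
    show (2 : ℕ) ≤ c₁ (σ (σ.symm u))
    rw [Equiv.apply_symm_apply]
    exact h2
  · funext w
    show (if σ w = u then c₁ u - 2 else if σ w = v then c₁ v + 1 else c₁ (σ w))
      = if w = σ.symm u then (c₁ ∘ σ) (σ.symm u) - 2
        else if w = σ.symm v then (c₁ ∘ σ) (σ.symm v) + 1 else (c₁ ∘ σ) w
    simp only [Function.comp_apply, Equiv.apply_symm_apply, ← Equiv.eq_symm_apply]

lemma rtg_comp (σ : Equiv.Perm (Fin (2*n+1)))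
    (hadj : ∀ u v, (Gr n).Edge u v → (Gr n).Edge (σ.symm u) (σ.symm v))
    {c₁ c₂ : Fin (2*n+1) → ℕ} (h : Relation.ReflTransGen (Gr n).Step c₁ c₂) :
    Relation.ReflTransGen (Gr n).Step (c₁ ∘ σ) (c₂ ∘ σ) := by
  induction h with
  | refl => exact Relation.ReflTransGen.refl
  | tail _ hstep ih => exact ih.tail (step_comp σ hadj hstep)

lemma solvable_comp (σ : Equiv.Perm (Fin (2*n+1)))
    (hadj : ∀ u v, (Gr n).Edge u v → (Gr n).Edge (σ.symm u) (σ.symm v))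
    {c : Fin (2*n+1) → ℕ} {m₀ : ℕ} {t : Fin (2*n+1)}
    (h : (Gr n).Solvable m₀ (σ t) c) : (Gr n).Solvable m₀ t (c ∘ σ) := by
  obtain ⟨c', hrtg, hc'⟩ := h
  exact ⟨c' ∘ σ, rtg_comp σ hadj hrtg, hc'⟩

lemma hadj_neg (hn : 1 ≤ n) : ∀ u v : Fin (2*n+1), (Gr n).Edge u v →
    (Gr n).Edge ((Equiv.neg (Fin (2*n+1))).symm u) ((Equiv.neg (Fin (2*n+1))).symm v) := by
  intro u v h
  rw [edge_iff hn] at h ⊢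
  have hs : ∀ w : Fin (2*n+1), (Equiv.neg (Fin (2*n+1))).symm w = -w := fun w => by simp
  rw [hs, hs]
  rcases h with h | h
  · right; rw [← h]; ring
  · left; rw [← h]; ring

lemma hadj_addRight (hn : 1 ≤ n) (t : Fin (2*n+1)) : ∀ u v : Fin (2*n+1), (Gr n).Edge u v →
    (Gr n).Edge ((Equiv.addRight t).symm u) ((Equiv.addRight t).symm v) := by
  intro u v h
  rw [edge_iff hn] at h ⊢
  have hs : ∀ w : Fin (2*n+1), (Equiv.addRight t).symm w = w - t := fun w => by
    simp [sub_eq_add_neg]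
  rw [hs, hs]
  rcases h with h | h
  · left; rw [← h]; ring
  · right; rw [← h]; ring

lemma hadj_subRight (hn : 1 ≤ n) (t : Fin (2*n+1)) : ∀ u v : Fin (2*n+1), (Gr n).Edge u v →
    (Gr n).Edge ((Equiv.subRight t).symm u) ((Equiv.subRight t).symm v) := by
  intro u v h
  rw [edge_iff hn] at h ⊢
  have hs : ∀ w : Fin (2*n+1), (Equiv.subRight t).symm w = w + t := fun w => by simp
  rw [hs, hs]
  rcases h with h | h
  · left; rw [← h]; ring
  · right; rw [← h]; ring


lemma multiMove (hn : 1 ≤ n) : ∀ (k : ℕ) (c : Fin (2*n+1) → ℕ) (u v : Fin (2*n+1)),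
    (Gr n).Edge u v → u ≠ v → 2*k ≤ c u →
    ∃ c', Relation.ReflTransGen (Gr n).Step c c' ∧ c' u = c u - 2*k ∧ c' v = c v + k ∧
      ∀ w, w ≠ u → w ≠ v → c' w = c w := by
  intro k
  induction k with
  | zero => intro c u v _ _ _; exact ⟨c, .refl, by omega, by omega, fun _ _ _ => rfl⟩
  | succ k ih =>
    intro c u v hE hne hk
    set c₁ : Fin (2*n+1) → ℕ :=
      fun w => if w = u then c u - 2 else if w = v then c v + 1 else c w with hc₁
    have hstep : (Gr n).Step c c₁ := step_mk c u v hE (by omega)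
    have hvu : v ≠ u := hne.symm
    have hc₁u : c₁ u = c u - 2 := by simp [hc₁]
    have hc₁v : c₁ v = c v + 1 := by simp [hc₁, hvu]
    obtain ⟨c', hrtg, h1, h2, h3⟩ := ih c₁ u v hE hne (by omega)
    refine ⟨c', .head hstep hrtg, ?_, ?_, ?_⟩
    · rw [h1, hc₁u]; omega
    · rw [h2, hc₁v]; omega
    · intro w hw1 hw2; rw [h3 w hw1 hw2, hc₁]; simp [hw1, hw2]

lemma build (hn : 1 ≤ n) (c : Fin (2*n+1) → ℕ) : ∀ (len i : ℕ), 1 ≤ i → i + len ≤ 2*n+1 →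
    ∃ c', Relation.ReflTransGen (Gr n).Step c c' ∧
      gvalN (Lf n c) i len ≤ c' ((i : ℕ) : Fin (2*n+1)) ∧
      ∀ w : Fin (2*n+1), w.val < i → c' w = c w := by
  intro len
  induction len with
  | zero => intro i _ _; exact ⟨c, .refl, by simp, fun _ _ => rfl⟩
  | succ len ih =>
    intro i hi him
    obtain ⟨c₁, hrtg₁, hval₁, hfix₁⟩ := ih (i+1) (by omega) (by omega)
    have hilt : i < 2*n+1 := by omega
    have hEdge : (Gr n).Edge ((i+1 : ℕ) : Fin (2*n+1)) ((i : ℕ) : Fin (2*n+1)) := by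
      rw [edge_iff hn]; left; push_cast; ring
    have hne : ((i+1 : ℕ) : Fin (2*n+1)) ≠ ((i : ℕ) : Fin (2*n+1)) :=
      (show (SimpleGraph.cycleGraph (2*n+1)).Adj ((i+1:ℕ) : Fin (2*n+1)) ((i:ℕ) : Fin (2*n+1))
        from hEdge).ne
    set k := gvalN (Lf n c) (i+1) len / 2 with hk
    obtain ⟨c₂, hrtg₂, h2u, h2v, h2o⟩ := multiMove hn k c₁ _ _ hEdge hne (by omega)
    refine ⟨c₂, hrtg₁.trans hrtg₂, ?_, ?_⟩
    · rw [gvalN_succ, h2v, hfix₁ _ (by rw [Fin.val_cast_of_lt hilt]; omega)]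
      exact le_rfl
    · intro w hw
      have hwv : w ≠ ((i:ℕ) : Fin (2*n+1)) := by
        intro h; rw [h, Fin.val_cast_of_lt hilt] at hw; omega
      rcases Nat.lt_or_ge (i+1) (2*n+1) with hlt | hge
      · have hwu : w ≠ ((i+1:ℕ) : Fin (2*n+1)) := by
          intro h; rw [h, Fin.val_cast_of_lt hlt] at hw; omega
        rw [h2o w hwu hwv]; exact hfix₁ w (by omega)
      · have hlen : len = 0 := by omega
        have hk0 : k = 0 := by rw [hk, hlen]; simp
        by_cases hwu : w = ((i+1:ℕ) : Fin (2*n+1))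
        · rw [hwu, h2u, hk0, ← hwu]
          have : c₂ w = c₁ w := by rw [hwu, h2u, hk0]; omega
          rw [Nat.sub_zero]
          exact hfix₁ w (by omega)
        · rw [h2o w hwu hwv]; exact hfix₁ w (by omega)

lemma solv_of_L (hn : 1 ≤ n) (c : Fin (2*n+1) → ℕ) (hL : 2 ≤ Lval n c) :
    (Gr n).Solvable 1 0 c := by
  obtain ⟨c₁, hrtg, hval, _⟩ := build hn c (2*n) 1 le_rfl (by omega)
  have h1 : ((1:ℕ) : Fin (2*n+1)) = 1 := Nat.cast_one
  rw [h1] at hval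
  have hval' : 2 ≤ c₁ 1 := le_trans hL hval
  have hE : (Gr n).Edge 1 0 := by rw [edge_iff hn]; left; rw [sub_zero]
  have hstep := step_mk c₁ 1 0 hE hval'
  refine ⟨_, hrtg.tail hstep, ?_⟩
  have h01 : (0 : Fin (2*n+1)) ≠ 1 := by
    intro h
    have := congrArg Fin.val h
    rw [Fin.val_zero, val_one hn] at this
    omega
  show 1 ≤ if (0 : Fin (2*n+1)) = 1 then c₁ 1 - 2 else
    if (0 : Fin (2*n+1)) = 0 then c₁ 0 + 1 else c₁ 0
  rw [if_neg h01, if_pos rfl]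
  omega

lemma solv_of_R (hn : 1 ≤ n) (c : Fin (2*n+1) → ℕ) (hR : 2 ≤ Rval n c) :
    (Gr n).Solvable 1 0 c := by
  have h : (Gr n).Solvable 1 0 (fun v => c (-v)) := solv_of_L hn (fun v => c (-v)) hR
  have hcc : ((fun v => c (-v)) ∘ (Equiv.neg (Fin (2*n+1)))) = c := by
    funext w; simp
  have h0 : (Equiv.neg (Fin (2*n+1))) 0 = 0 := by simp
  have h2 := solvable_comp (Equiv.neg (Fin (2*n+1))) (hadj_neg hn)
    (t := 0) (c := fun v => c (-v)) (by rw [h0]; exact h)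
  rwa [hcc] at h2


def InvP (n : ℕ) (c : Fin (2*n+1) → ℕ) : Prop :=
  c 0 = 0 ∧ Lval n c ≤ 1 ∧ Rval n c ≤ 1

lemma inv_neg (c : Fin (2*n+1) → ℕ) (h : InvP n c) : InvP n (fun v => c (-v)) := by
  obtain ⟨h0, hL, hR⟩ := h
  refine ⟨by simpa using h0, hR, ?_⟩
  show Lval n (fun v => (fun w => c (-w)) (-v)) ≤ 1
  simp only [neg_neg]
  exact hL

lemma invA (hn : 1 ≤ n) (c c' : Fin (2*n+1) → ℕ) (u v : Fin (2*n+1))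
    (huv : u = v + 1) (h2 : 2 ≤ c u)
    (hc' : c' = fun w => if w = u then c u - 2 else if w = v then c v + 1 else c w)
    (hI : InvP n c) : InvP n c' := by
  obtain ⟨h0, hL, hR⟩ := hI
  by_cases hv0 : v = 0
  · exfalso
    have hu1 : u = 1 := by rw [huv, hv0, zero_add]
    have hle : Lf n c 1 ≤ Lval n c := le_gvalN _ 1 (2*n) (by omega)
    have hLf1 : Lf n c 1 = c u := by
      rw [hu1]
      show c ((1:ℕ) : Fin (2*n+1)) = c 1
      rw [Nat.cast_one]
    omega
  by_cases hu0 : u = 0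
  · exfalso; rw [hu0] at h2; omega
  have hvlt : v.val < 2*n+1 := v.isLt
  have hv1 : 1 ≤ v.val := by
    by_contra h
    exact hv0 (Fin.ext (by rw [Fin.val_zero]; omega))
  have hvlast : v ≠ Fin.last (2*n) := by
    intro h
    apply hu0
    rw [huv, h]
    exact Fin.last_add_one (2*n)
  have huval : u.val = v.val + 1 := by
    rw [huv, Fin.val_add_one]
    rw [if_neg hvlast]
  have hult : u.val < 2*n+1 := u.isLt
  set j := v.val with hj
  have hcastv : ((j : ℕ) : Fin (2*n+1)) = v := Fin.ext (by rw [Fin.val_cast_of_lt hvlt])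
  have hcastu : ((j+1 : ℕ) : Fin (2*n+1)) = u :=
    Fin.ext (by rw [Fin.val_cast_of_lt (by omega)]; omega)
  have hneuv : v ≠ u := by
    intro h
    have := congrArg Fin.val h
    omega
  refine ⟨?_, ?_, ?_⟩
  · rw [hc']
    show (if (0 : Fin (2*n+1)) = u then c u - 2 else
      if (0 : Fin (2*n+1)) = v then c v + 1 else c 0) = 0
    rw [if_neg (fun h => hu0 h.symm), if_neg (fun h => hv0 h.symm)]
    exact h0
  · have hml := gvalN_moveLeft (c := Lf n c) (c' := Lf n c') (2*n) 1 j
      (by omega) (by omega)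
      (by show 2 ≤ c ((j+1 : ℕ) : Fin (2*n+1)); rw [hcastu]; exact h2)
      (by show c' ((j:ℕ) : Fin (2*n+1)) = c ((j:ℕ) : Fin (2*n+1)) + 1
          rw [hcastv]
          simp only [hc']
          simp [hneuv])
      (by show c' ((j+1:ℕ) : Fin (2*n+1)) = c ((j+1:ℕ) : Fin (2*n+1)) - 2
          rw [hcastu]
          simp only [hc']
          simp)
      (by intro kk hk1 hk2 hk3 hk4
          show c' ((kk:ℕ) : Fin (2*n+1)) = c ((kk:ℕ) : Fin (2*n+1))
          have hkk : kk < 2*n+1 := by omega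
          have hnu : ((kk:ℕ) : Fin (2*n+1)) ≠ u := by
            intro h
            have := congrArg Fin.val h
            rw [Fin.val_cast_of_lt hkk] at this
            omega
          have hnv : ((kk:ℕ) : Fin (2*n+1)) ≠ v := by
            intro h
            have := congrArg Fin.val h
            rw [Fin.val_cast_of_lt hkk] at this
            omega
          simp only [hc']
          rw [if_neg hnu, if_neg hnv])
    exact le_trans hml hL
  · set p := 2*n+1 - (j+1) with hp
    have hnegp : (-((p : ℕ) : Fin (2*n+1))) = u := by
      rw [neg_cast hn p (by omega) (by omega)]
      have h1 : 2*n+1-p = j+1 := by omega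
      rw [h1, hcastu]
    have hnegp1 : (-((p+1 : ℕ) : Fin (2*n+1))) = v := by
      rw [neg_cast hn (p+1) (by omega) (by omega)]
      have h1 : 2*n+1-(p+1) = j := by omega
      rw [h1, hcastv]
    have hmr := gvalN_moveRight (c := Lf n (fun w => c (-w))) (c' := Lf n (fun w => c' (-w)))
      (2*n) 1 p (by omega) (by omega)
      (by show 2 ≤ c (-((p:ℕ) : Fin (2*n+1))); rw [hnegp]; exact h2)
      (by show c' (-((p:ℕ) : Fin (2*n+1))) = c (-((p:ℕ) : Fin (2*n+1))) - 2
          rw [hnegp]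
          simp only [hc']
          simp)
      (by show c' (-((p+1:ℕ) : Fin (2*n+1))) = c (-((p+1:ℕ) : Fin (2*n+1))) + 1
          rw [hnegp1]
          simp only [hc']
          simp [hneuv])
      (by intro kk hk1 hk2 hk3 hk4
          show c' (-((kk:ℕ) : Fin (2*n+1))) = c (-((kk:ℕ) : Fin (2*n+1)))
          rw [neg_cast hn kk (by omega) (by omega)]
          have hkk : 2*n+1-kk < 2*n+1 := by omega
          have hnu : (((2*n+1-kk : ℕ)) : Fin (2*n+1)) ≠ u := by
            intro h
            have := congrArg Fin.val h
            rw [Fin.val_cast_of_lt hkk] at this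
            omega
          have hnv : (((2*n+1-kk : ℕ)) : Fin (2*n+1)) ≠ v := by
            intro h
            have := congrArg Fin.val h
            rw [Fin.val_cast_of_lt hkk] at this
            omega
          simp only [hc']
          rw [if_neg hnu, if_neg hnv])
    exact le_trans hmr hR

lemma inv_step (hn : 1 ≤ n) {c c' : Fin (2*n+1) → ℕ}
    (h : (Gr n).Step c c') (hI : InvP n c) : InvP n c' := by
  obtain ⟨u, v, hE, h2, hc'⟩ := h
  have h2' : 2 ≤ c u := h2
  rw [edge_iff hn] at hE
  rcases hE with hE | hE
  · exact invA hn c c' u v (by rw [← hE]; ring) h2' hc' hI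
  · have hIneg := inv_neg c hI
    have hmir : InvP n (fun w => c' (-w)) := by
      apply invA hn (fun w => c (-w)) (fun w => c' (-w)) (-u) (-v) ?_ ?_ ?_ hIneg
      · rw [← hE]; ring
      · show 2 ≤ c (- -u); rw [neg_neg]; exact h2'
      · funext w
        show c' (-w) = if w = -u then c (- -u) - 2 else if w = -v then c (- -v) + 1 else c (-w)
        rw [hc']
        show (if -w = u then c u - 2 else if -w = v then c v + 1 else c (-w)) = _
        have e1 : (-w = u) = (w = -u) :=
          propext ⟨fun h => by rw [← h, neg_neg], fun h => by rw [h, neg_neg]⟩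
        have e2 : (-w = v) = (w = -v) :=
          propext ⟨fun h => by rw [← h, neg_neg], fun h => by rw [h, neg_neg]⟩
        simp only [e1, e2, neg_neg]
    have h3 := inv_neg _ hmir
    simp only [neg_neg] at h3
    exact h3

lemma inv_rtg (hn : 1 ≤ n) {c c' : Fin (2*n+1) → ℕ}
    (h : Relation.ReflTransGen (Gr n).Step c c') (hI : InvP n c) : InvP n c' := by
  induction h with
  | refl => exact hI
  | tail _ hstep ih => exact inv_step hn hstep ih

lemma not_solvable_of_inv (hn : 1 ≤ n) {c : Fin (2*n+1) → ℕ} (hI : InvP n c) :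
    ¬ (Gr n).Solvable 1 0 c := by
  rintro ⟨c', hrtg, hc'⟩
  obtain ⟨h0, -, -⟩ := inv_rtg hn hrtg hI
  omega

lemma gvalN_zero_fun {f : ℕ → ℕ} : ∀ (len i : ℕ),
    (∀ k, i ≤ k → k < i + len → f k = 0) → gvalN f i len = 0 := by
  intro len
  induction len with
  | zero => intro i _; rfl
  | succ len ih =>
    intro i h
    rw [gvalN_succ, h i le_rfl (by omega), ih (i+1) (fun k h1 h2 => h k (by omega) (by omega))]

lemma gvalN_spike (f : ℕ → ℕ) (nn a : ℕ) (hn : 1 ≤ nn)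
    (hf0 : ∀ k, 1 ≤ k → k ≤ 2*nn → k ≠ nn → k ≠ nn+1 → f k = 0)
    (hfn : f nn ≤ a) (hfn1 : f (nn+1) ≤ a) (ha : 3*a < 2^(nn+1)) :
    gvalN f 1 (2*nn) ≤ 1 := by
  obtain ⟨m, rfl⟩ : ∃ m, nn = m + 1 := ⟨nn - 1, by omega⟩
  have htail : gvalN f (m+1+1+1) m = 0 :=
    gvalN_zero_fun m (m+1+1+1) (fun k h1 h2 => hf0 k (by omega) (by omega) (by omega) (by omega))
  have hin : gvalN f (m+1+1) (m+1) ≤ a := by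
    rw [gvalN_succ, htail]
    have h := hfn1
    omega
  have hbase : gvalN f (m+1) (m+2) ≤ 2^(m+1) - 1 := by
    rw [gvalN_succ]
    have h1 : gvalN f (m+2) (m+1) / 2 ≤ a / 2 := Nat.div_le_div_right hin
    have h2 : 2^(m+2) = 2*2^(m+1) := by rw [pow_succ]; ring
    have h3 : 1 ≤ 2^(m+1) := Nat.one_le_two_pow
    omega
  have main : ∀ k, k ≤ m → gvalN f (m+1-k) (m+2+k) ≤ 2^(m+1-k) - 1 := by
    intro k
    induction k with
    | zero => intro _; simpa using hbase
    | succ k ih =>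
      intro hk
      have hik := ih (by omega)
      have hpos : m+1-(k+1) = m-k := by omega
      have hlen : m+2+(k+1) = (m+2+k)+1 := by omega
      rw [hpos, hlen, gvalN_succ]
      have hz : f (m-k) = 0 := hf0 (m-k) (by omega) (by omega) (by omega) (by omega)
      have hnext : m-k+1 = m+1-k := by omega
      rw [hz, hnext]
      have hdiv : gvalN f (m+1-k) (m+2+k) / 2 ≤ (2^(m+1-k) - 1) / 2 := Nat.div_le_div_right hik
      have hpow : 2^(m+1-k) = 2*2^(m-k) := by
        rw [show m+1-k = (m-k)+1 by omega, pow_succ]; ring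
      have h3 : 1 ≤ 2^(m-k) := Nat.one_le_two_pow
      omega
  have h := main m le_rfl
  rw [show m+1-m = 1 by omega] at h
  rw [show m+2+m = 2*(m+1) by ring] at h
  simpa using h

def conf0 (n : ℕ) : Fin (2*n+1) → ℕ :=
  fun v => if v.val = n then 2^(n+1)/3 else if v.val = n+1 then 2^(n+1)/3 else 0

lemma ha3 (n : ℕ) : 3*(2^(n+1)/3) < 2^(n+1) := by
  have hr0 : 2^(n+1) % 3 ≠ 0 := by
    intro h0
    have hdvd : (3:ℕ) ∣ 2^(n+1) := Nat.dvd_of_mod_eq_zero h0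
    have := Nat.Prime.dvd_of_dvd_pow Nat.prime_three hdvd
    omega
  omega

lemma conf0_inv (hn : 1 ≤ n) : InvP n (conf0 n) := by
  refine ⟨?_, ?_, ?_⟩
  · show (if (0 : Fin (2*n+1)).val = n then _ else _) = 0
    rw [Fin.val_zero, if_neg (by omega), if_neg (by omega)]
  · apply gvalN_spike (Lf n (conf0 n)) n (2^(n+1)/3) hn ?_ ?_ ?_ (ha3 n)
    · intro k h1 h2 h3 h4
      show conf0 n ((k:ℕ) : Fin (2*n+1)) = 0
      show (if ((k:ℕ) : Fin (2*n+1)).val = n then _ else _) = 0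
      rw [Fin.val_cast_of_lt (by omega), if_neg h3, if_neg h4]
    · show conf0 n ((n:ℕ) : Fin (2*n+1)) ≤ _
      show (if ((n:ℕ) : Fin (2*n+1)).val = n then 2^(n+1)/3 else _) ≤ 2^(n+1)/3
      rw [Fin.val_cast_of_lt (by omega), if_pos rfl]
    · show conf0 n ((n+1:ℕ) : Fin (2*n+1)) ≤ _
      show (if ((n+1:ℕ) : Fin (2*n+1)).val = n then _ else
        if ((n+1:ℕ) : Fin (2*n+1)).val = n+1 then 2^(n+1)/3 else 0) ≤ 2^(n+1)/3
      rw [Fin.val_cast_of_lt (by omega), if_neg (by omega), if_pos rfl]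
  · apply gvalN_spike (Lf n (fun v => conf0 n (-v))) n (2^(n+1)/3) hn ?_ ?_ ?_ (ha3 n)
    · intro k h1 h2 h3 h4
      show conf0 n (-((k:ℕ) : Fin (2*n+1))) = 0
      rw [neg_cast hn k (by omega) (by omega)]
      show (if ((2*n+1-k : ℕ) : Fin (2*n+1)).val = n then _ else _) = 0
      rw [Fin.val_cast_of_lt (by omega), if_neg (by omega), if_neg (by omega)]
    · show conf0 n (-((n:ℕ) : Fin (2*n+1))) ≤ _
      rw [neg_cast hn n (by omega) (by omega)]
      show (if ((2*n+1-n : ℕ) : Fin (2*n+1)).val = n then _ else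
        if ((2*n+1-n : ℕ) : Fin (2*n+1)).val = n+1 then 2^(n+1)/3 else 0) ≤ 2^(n+1)/3
      rw [Fin.val_cast_of_lt (by omega), if_neg (by omega), if_pos (by omega)]
    · show conf0 n (-((n+1:ℕ) : Fin (2*n+1))) ≤ _
      rw [neg_cast hn (n+1) (by omega) (by omega)]
      show (if ((2*n+1-(n+1) : ℕ) : Fin (2*n+1)).val = n then 2^(n+1)/3 else _) ≤ 2^(n+1)/3
      rw [Fin.val_cast_of_lt (by omega), if_pos (by omega)]

lemma conf0_sum (hn : 1 ≤ n) : ∑ v, conf0 n v = 2*(2^(n+1)/3) := by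
  have h1 : ∑ v : Fin (2*n+1), conf0 n v
      = ∑ k ∈ Finset.range (2*n+1), conf0 n ((k:ℕ) : Fin (2*n+1)) := by
    rw [← Fin.sum_univ_eq_sum_range (fun k => conf0 n ((k:ℕ) : Fin (2*n+1))) (2*n+1)]
    exact Finset.sum_congr rfl (fun i _ => by rw [Fin.cast_val_eq_self])
  rw [h1]
  have h2 : ∀ k ∈ Finset.range (2*n+1), conf0 n ((k:ℕ) : Fin (2*n+1))
      = (if k = n then 2^(n+1)/3 else 0) + (if k = n+1 then 2^(n+1)/3 else 0) := by
    intro k hk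
    rw [Finset.mem_range] at hk
    show (if ((k:ℕ) : Fin (2*n+1)).val = n then _ else _) = _
    rw [Fin.val_cast_of_lt hk]
    split_ifs <;> omega
  rw [Finset.sum_congr rfl h2, Finset.sum_add_distrib,
    Finset.sum_ite_eq' (Finset.range (2*n+1)) n (fun _ => 2^(n+1)/3),
    Finset.sum_ite_eq' (Finset.range (2*n+1)) (n+1) (fun _ => 2^(n+1)/3),
    if_pos (Finset.mem_range.mpr (by omega)), if_pos (Finset.mem_range.mpr (by omega))]
  omega

lemma weight_L (hn : 1 ≤ n) (c : Fin (2*n+1) → ℕ) (hL : Lval n c ≤ 1) :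
    ∑ k ∈ Finset.range (2*n), Lf n c (1+k) * 2^(2*n-1-k) ≤ 2^(2*n) - 1 := by
  have h := gvalN_weight (Lf n c) (2*n-1) 1
  have hlen : 2*n-1+1 = 2*n := by omega
  rw [hlen] at h
  have hL' : gvalN (Lf n c) 1 (2*n) ≤ 1 := hL
  have hle : 2^(2*n-1) * (gvalN (Lf n c) 1 (2*n) + 1) ≤ 2^(2*n-1) * 2 :=
    mul_le_mul_right (by omega) (2^(2*n-1))
  have hpow : 2^(2*n-1) * 2 = 2^(2*n) := by
    rw [← pow_succ, show 2*n-1+1 = 2*n from by omega]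
  omega

lemma weight_R (hn : 1 ≤ n) (c : Fin (2*n+1) → ℕ) (hR : Rval n c ≤ 1) :
    ∑ k ∈ Finset.range (2*n), Lf n c (1+k) * 2^k ≤ 2^(2*n) - 1 := by
  have h := weight_L hn (fun v => c (-v)) hR
  rw [← Finset.sum_range_reflect (fun j => Lf n c (1+j) * 2^j) (2*n)]
  refine le_trans (le_of_eq (Finset.sum_congr rfl ?_)) h
  intro k hk
  rw [Finset.mem_range] at hk
  show Lf n c (1+(2*n-1-k)) * 2^(2*n-1-k) = Lf n (fun v => c (-v)) (1+k) * 2^(2*n-1-k)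
  congr 1
  show c ((1+(2*n-1-k) : ℕ) : Fin (2*n+1)) = c (-(((1+k : ℕ)) : Fin (2*n+1)))
  rw [neg_cast hn (1+k) (by omega) (by omega)]
  rw [show (1+(2*n-1-k)) = 2*n+1-(1+k) by omega]

lemma piBound_up (hn : 1 ≤ n) : (Gr n).PiBound 1 0 (2*(2^(n+1)/3) + 1) := by
  intro c hsize
  rcases Nat.lt_or_ge (c 0) 1 with h0 | h0
  swap
  · exact ⟨c, .refl, h0⟩
  rcases Nat.lt_or_ge (Lval n c) 2 with hL | hL
  swap
  · exact solv_of_L hn c hL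
  rcases Nat.lt_or_ge (Rval n c) 2 with hR | hR
  swap
  · exact solv_of_R hn c hR
  exfalso
  have H1 := weight_L hn c (by omega)
  have H2 := weight_R hn c (by omega)
  have hcore : ∑ k ∈ Finset.range (2*n), Lf n c (1+k) ≤ 2*(2^(n+1)/3) :=
    arith_core n hn (fun k => Lf n c (1+k)) H1 H2
  have htot : ∑ v : Fin (2*n+1), c v = c 0 + ∑ k ∈ Finset.range (2*n), Lf n c (1+k) := by
    have h1 : ∑ v : Fin (2*n+1), c v = ∑ k ∈ Finset.range (2*n+1), c ((k:ℕ) : Fin (2*n+1)) := by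
      rw [← Fin.sum_univ_eq_sum_range (fun k => c ((k:ℕ) : Fin (2*n+1))) (2*n+1)]
      exact Finset.sum_congr rfl (fun i _ => by rw [Fin.cast_val_eq_self])
    rw [h1, Finset.sum_range_succ' (fun k => c ((k:ℕ) : Fin (2*n+1))) (2*n), Nat.cast_zero]
    rw [Finset.sum_congr rfl (fun k _ => by rw [Nat.add_comm k 1]; rfl :
      ∀ k ∈ Finset.range (2*n), c ((k+1:ℕ) : Fin (2*n+1)) = Lf n c (1+k))]
    omega
  omega

lemma not_piBound (hn : 1 ≤ n) : ¬ (Gr n).PiBound 1 0 (2*(2^(n+1)/3)) := by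
  intro h
  exact not_solvable_of_inv hn (conf0_inv hn) (h (conf0 n) (le_of_eq (conf0_sum hn).symm))

lemma piBound_mono (t : Fin (2*n+1)) {p q : ℕ} (hpq : p ≤ q)
    (h : (Gr n).PiBound 1 t p) : (Gr n).PiBound 1 t q :=
  fun c hc => h c (le_trans hpq hc)

lemma pi_zero (hn : 1 ≤ n) : (Gr n).pi 1 0 = 2*(2^(n+1)/3) + 1 := by
  have hup := piBound_up hn
  have hne : {p | (Gr n).PiBound 1 0 p}.Nonempty := ⟨_, hup⟩
  apply le_antisymm
  · exact Nat.sInf_le hup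
  · have hmem : (Gr n).PiBound 1 0 ((Gr n).pi 1 0) := Nat.sInf_mem hne
    by_contra hcon
    push_neg at hcon
    exact not_piBound hn (piBound_mono 0 (by omega) hmem)

lemma piBound_transfer (σ : Equiv.Perm (Fin (2*n+1)))
    (hadj : ∀ u v, (Gr n).Edge u v → (Gr n).Edge (σ.symm u) (σ.symm v))
    (t : Fin (2*n+1)) {p : ℕ}
    (h : (Gr n).PiBound 1 (σ t) p) : (Gr n).PiBound 1 t p := by
  intro c hc
  have hsum : ∑ v, (c ∘ σ.symm) v = ∑ v, c v := by
    simp only [Function.comp_apply]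
    exact Equiv.sum_comp σ.symm c
  have hd := h (c ∘ σ.symm) (by rw [hsum]; exact hc)
  have h2 := solvable_comp σ hadj (t := t) hd
  have hcc : (c ∘ σ.symm) ∘ σ = c := by funext w; simp
  rwa [hcc] at h2

lemma pi_any (hn : 1 ≤ n) (t : Fin (2*n+1)) : (Gr n).pi 1 t = (Gr n).pi 1 0 := by
  have hset : {p | (Gr n).PiBound 1 t p} = {p | (Gr n).PiBound 1 0 p} := by
    ext p
    constructor
    · intro h
      refine piBound_transfer (Equiv.addRight t) (hadj_addRight hn t) 0 ?_
      have h0 : (Equiv.addRight t) 0 = t := by simp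
      rwa [h0]
    · intro h
      refine piBound_transfer (Equiv.subRight t) (hadj_subRight hn t) t ?_
      have h0 : (Equiv.subRight t) t = 0 := by simp
      rwa [h0]
  show sInf {p | (Gr n).PiBound 1 t p} = sInf {p | (Gr n).PiBound 1 0 p}
  rw [hset]

lemma piMax_eq (hn : 1 ≤ n) : (Gr n).piMax = 2*(2^(n+1)/3) + 1 := by
  show (Finset.univ.sup fun t => (Gr n).pi 1 t) = _
  rw [Finset.sup_congr rfl (fun t _ => by rw [pi_any hn t, pi_zero hn])]
  exact Finset.sup_const Finset.univ_nonempty _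

end PebAux

/-- For `n ≥ 1`, `π(C_{2n+1}^(2)) = 2⌊2^{n+1}/3⌋ + 1`. -/
theorem stmt_5 (n : ℕ) (hn : 1 ≤ n) :
    ((SimpleGraph.cycleGraph (2 * n + 1)).toEW 2 (le_refl 2)).piMax =
      2 * (2 ^ (n + 1) / 3) + 1 := by
  exact PebAux.piMax_eq hn
end

section
/- Every feasible pebble flow on an edge-weighted digraph is realizable. -/
open Finset

/-- A pebble flow: a configuration together with flow values along the edges. -/
structure PebbleFlow {V : Type} (G : EWDigraph V) where
  conf : V → ℕ
  flow : V → V → ℕ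
  flow_eq_zero : ∀ u v, ¬ G.Edge u v → flow u v = 0

namespace PebbleFlow

variable {V : Type} [Fintype V] [DecidableEq V] {G : EWDigraph V}

/-- The inflow of a vertex. -/
def inflow (F : PebbleFlow G) (v : V) : ℕ := ∑ u, F.flow u v

/-- The weighted outflow of a vertex. -/
def woutflow (F : PebbleFlow G) (v : V) : ℕ := ∑ u, G.weight v u * F.flow v u

/-- The excess of a vertex. -/
def excess (F : PebbleFlow G) (v : V) : ℤ :=
  (F.conf v : ℤ) + F.inflow v - F.woutflow v

/-- A pebble flow is feasible if every vertex has non-negative excess. -/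
def Feasible (F : PebbleFlow G) : Prop := ∀ v, 0 ≤ F.excess v

/-- A flow step: a pebbling step along an edge with positive flow value, which
decreases that flow value by one. -/
def FlowStep (F₁ F₂ : PebbleFlow G) : Prop :=
  ∃ u v, G.Edge u v ∧ 1 ≤ F₁.flow u v ∧ G.weight u v ≤ F₁.conf u ∧
    F₂.conf = (fun w => if w = u then F₁.conf u - G.weight u v
      else if w = v then F₁.conf v + 1 else F₁.conf w) ∧
    F₂.flow = fun x y => if x = u ∧ y = v then F₁.flow u v - 1 else F₁.flow x y

/-- A pebble flow is realized if every vertex has at least as many pebbles as its excess. -/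
def Realized (F : PebbleFlow G) : Prop := ∀ v, F.excess v ≤ (F.conf v : ℤ)

/-- A pebble flow is realizable if a realized pebble flow is reachable from it by
finitely many flow steps. -/
def Realizable (F : PebbleFlow G) : Prop :=
  ∃ F' : PebbleFlow G, Relation.ReflTransGen FlowStep F F' ∧ F'.Realized

end PebbleFlow

section Aux

variable {V : Type} [Fintype V] [DecidableEq V] {G : EWDigraph V}

/-- If a flow value is positive, there is an edge there. -/
lemma edge_of_flow_pos (F : PebbleFlow G) {u v : V} (h : 0 < F.flow u v) : G.Edge u v := by
  by_contra hE
  have := F.flow_eq_zero u v hE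
  omega

/-- A "stuck" feasible flow (no non-loop edge with positive flow whose tail has
enough pebbles) is realized. -/
lemma realized_of_stuck (F : PebbleFlow G) (hF : F.Feasible)
    (h : ∀ u v, u ≠ v → 1 ≤ F.flow u v → F.conf u < G.weight u v) : F.Realized := by
  classical
  by_contra hR
  simp only [PebbleFlow.Realized, not_forall, not_le] at hR
  obtain ⟨v₀, hv₀⟩ := hR
  set D : V → Prop := fun v => F.woutflow v < F.inflow v with hDdef
  have hv₀D : D v₀ := by
    simp only [PebbleFlow.excess] at hv₀
    have : (F.woutflow v₀ : ℤ) < (F.inflow v₀ : ℤ) := by linarith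
    exact_mod_cast this
  set R : V → V → Prop := fun a b => a ≠ b ∧ 0 < F.flow a b with hRdef
  set S : Finset V := Finset.univ.filter (fun u => ∃ d, D d ∧ Relation.ReflTransGen R u d)
    with hSdef
  have hmemS : ∀ u, u ∈ S ↔ ∃ d, D d ∧ Relation.ReflTransGen R u d := by
    intro u; simp [hSdef]
  have hv₀S : v₀ ∈ S := (hmemS v₀).mpr ⟨v₀, hv₀D, Relation.ReflTransGen.refl⟩
  -- S is closed under taking tails of positive-flow edges
  have hclosed : ∀ u v, 0 < F.flow u v → v ∈ S → u ∈ S := by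
    intro u v hf hv
    by_cases huv : u = v
    · subst huv; exact hv
    · obtain ⟨d, hd, hpath⟩ := (hmemS v).mp hv
      exact (hmemS u).mpr ⟨d, hd, Relation.ReflTransGen.head ⟨huv, hf⟩ hpath⟩
  -- every vertex of S not in D has an outgoing positive-flow non-loop edge into S
  have hwitness : ∀ u ∈ S, ¬ D u → ∃ s, s ∈ S ∧ u ≠ s ∧ 0 < F.flow u s := by
    intro u hu hDu
    obtain ⟨d, hd, hpath⟩ := (hmemS u).mp hu
    rcases Relation.ReflTransGen.cases_head hpath with heq | ⟨s, hRs, hpath'⟩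
    · exact absurd (heq ▸ hd) hDu
    · exact ⟨s, (hmemS s).mpr ⟨d, hd, hpath'⟩, hRs.1, hRs.2⟩
  -- (1) total inflow of S equals flow inside S
  have key1 : ∑ v ∈ S, (F.inflow v : ℤ) = ∑ v ∈ S, ∑ u ∈ S, (F.flow u v : ℤ) := by
    refine Finset.sum_congr rfl fun v hv => ?_
    have : ∑ u ∈ S, (F.flow u v : ℤ) = ∑ u ∈ Finset.univ, (F.flow u v : ℤ) := by
      refine Finset.sum_subset (Finset.subset_univ S) fun u _ hu => ?_
      by_contra hne
      have hpos : 0 < F.flow u v := by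
        rcases Nat.eq_zero_or_pos (F.flow u v) with h0 | h0
        · simp [h0] at hne
        · exact h0
      exact hu (hclosed u v hpos hv)
    rw [this]
    simp [PebbleFlow.inflow]
  -- (2) weighted outflow bound per vertex of S
  have key2 : ∀ u ∈ S,
      (∑ v ∈ S, (F.flow u v : ℤ)) + (if D u then 0 else (F.conf u : ℤ))
        ≤ (F.woutflow u : ℤ) := by
    intro u hu
    have hsub : ∑ v ∈ S, (F.flow u v : ℤ) ≤ ∑ v ∈ Finset.univ, (F.flow u v : ℤ) :=
      Finset.sum_le_sum_of_subset_of_nonneg (Finset.subset_univ S)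
        (fun v _ _ => by positivity)
    have hterm : ∀ v, (F.flow u v : ℤ) ≤ (G.weight u v : ℤ) * (F.flow u v : ℤ) := by
      intro v
      rcases Nat.eq_zero_or_pos (F.flow u v) with h0 | h0
      · simp [h0]
      · have hw : 2 ≤ G.weight u v := G.weight_ge u v (edge_of_flow_pos F h0)
        have : (1 : ℤ) * (F.flow u v : ℤ) ≤ (G.weight u v : ℤ) * (F.flow u v : ℤ) := by
          apply mul_le_mul_of_nonneg_right
          · exact_mod_cast Nat.one_le_of_lt hw
          · positivity
        linarith
    have hwout : (F.woutflow u : ℤ) = ∑ v ∈ Finset.univ, (G.weight u v : ℤ) * F.flow u v := by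
      simp [PebbleFlow.woutflow]
    by_cases hDu : D u
    · simp only [hDu, if_pos, add_zero]
      calc ∑ v ∈ S, (F.flow u v : ℤ) ≤ ∑ v ∈ Finset.univ, (F.flow u v : ℤ) := hsub
        _ ≤ ∑ v ∈ Finset.univ, (G.weight u v : ℤ) * F.flow u v :=
            Finset.sum_le_sum fun v _ => hterm v
        _ = (F.woutflow u : ℤ) := hwout.symm
    · simp only [hDu, if_neg, not_false_iff]
      obtain ⟨s, hsS, hus, hfs⟩ := hwitness u hu hDu
      have hcw : F.conf u < G.weight u s := h u s hus (by omega)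
      -- sum over univ splitting off s
      have hsplit : ∀ g : V → ℤ, ∑ v ∈ Finset.univ, g v = g s + ∑ v ∈ Finset.univ.erase s, g v := by
        intro g
        exact (Finset.add_sum_erase Finset.univ g (Finset.mem_univ s)).symm
      have h1 : (F.flow u s : ℤ) + (F.conf u : ℤ) ≤ (G.weight u s : ℤ) * F.flow u s := by
        have hf1 : (1 : ℤ) ≤ (F.flow u s : ℤ) := by exact_mod_cast hfs
        have hcw' : (F.conf u : ℤ) + 1 ≤ (G.weight u s : ℤ) := by exact_mod_cast hcw
        nlinarith
      calc (∑ v ∈ S, (F.flow u v : ℤ)) + (F.conf u : ℤ)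
          ≤ (∑ v ∈ Finset.univ, (F.flow u v : ℤ)) + (F.conf u : ℤ) := by linarith
        _ = (F.flow u s : ℤ) + (F.conf u : ℤ) + ∑ v ∈ Finset.univ.erase s, (F.flow u v : ℤ) := by
            rw [hsplit (fun v => (F.flow u v : ℤ))]; ring
        _ ≤ (G.weight u s : ℤ) * F.flow u s
              + ∑ v ∈ Finset.univ.erase s, (G.weight u v : ℤ) * F.flow u v := by
            have := Finset.sum_le_sum (fun v (_ : v ∈ Finset.univ.erase s) => hterm v)
            linarith
        _ = ∑ v ∈ Finset.univ, (G.weight u v : ℤ) * F.flow u v :=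
            (hsplit (fun v => (G.weight u v : ℤ) * F.flow u v)).symm
        _ = (F.woutflow u : ℤ) := hwout.symm
  -- (3) per-vertex lower bound from feasibility / deficiency
  have key3 : ∀ v ∈ S, (if D v then (1 : ℤ) else -(F.conf v : ℤ))
      ≤ (F.inflow v : ℤ) - (F.woutflow v : ℤ) := by
    intro v _
    by_cases hDv : D v
    · simp only [hDv, if_pos]
      have : F.woutflow v < F.inflow v := hDv
      have : (F.woutflow v : ℤ) < (F.inflow v : ℤ) := by exact_mod_cast this
      linarith
    · simp only [hDv, if_neg, not_false_iff]
      have := hF v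
      simp only [PebbleFlow.excess] at this
      linarith
  -- combine
  have sum2 : (∑ v ∈ S, ∑ u ∈ S, (F.flow u v : ℤ))
      + ∑ u ∈ S, (if D u then 0 else (F.conf u : ℤ)) ≤ ∑ u ∈ S, (F.woutflow u : ℤ) := by
    have := Finset.sum_le_sum key2
    rw [Finset.sum_add_distrib] at this
    have hswap : ∑ u ∈ S, ∑ v ∈ S, (F.flow u v : ℤ) = ∑ v ∈ S, ∑ u ∈ S, (F.flow u v : ℤ) :=
      Finset.sum_comm
    linarith
  have sum3 : ∑ v ∈ S, (if D v then (1 : ℤ) else -(F.conf v : ℤ))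
      ≤ (∑ v ∈ S, ∑ u ∈ S, (F.flow u v : ℤ)) - ∑ v ∈ S, (F.woutflow v : ℤ) := by
    have := Finset.sum_le_sum key3
    rw [Finset.sum_sub_distrib] at this
    linarith [key1]
  have hcomb : ∑ v ∈ S, (if D v then (1 : ℤ) else 0) ≤ 0 := by
    have hsplit : ∑ v ∈ S, (if D v then (1 : ℤ) else 0)
        = ∑ v ∈ S, (if D v then (1 : ℤ) else -(F.conf v : ℤ))
          + ∑ v ∈ S, (if D v then 0 else (F.conf v : ℤ)) := by
      rw [← Finset.sum_add_distrib]
      refine Finset.sum_congr rfl fun v _ => ?_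
      split_ifs <;> ring
    rw [hsplit]
    linarith
  have hpos : (1 : ℤ) ≤ ∑ v ∈ S, (if D v then (1 : ℤ) else 0) := by
    have := Finset.single_le_sum (f := fun v => if D v then (1 : ℤ) else 0)
      (fun v _ => by by_cases hDv : D v <;> simp [hDv]) hv₀S
    simpa [hv₀D] using this
  linarith

/-- Performing one flow step along a steppable non-loop edge. -/
lemma step_exists (F : PebbleFlow G) {u v : V} (huv : u ≠ v) (hE : G.Edge u v)
    (hf : 1 ≤ F.flow u v) (hc : G.weight u v ≤ F.conf u) :
    ∃ F₂ : PebbleFlow G, PebbleFlow.FlowStep F F₂ ∧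
      (∀ x, F₂.excess x = F.excess x) ∧
      (∑ a, ∑ b, F₂.flow a b) < ∑ a, ∑ b, F.flow a b := by
  classical
  set c₂ : V → ℕ := fun w => if w = u then F.conf u - G.weight u v
      else if w = v then F.conf v + 1 else F.conf w with hc₂
  set f₂ : V → V → ℕ := fun x y => if x = u ∧ y = v then F.flow u v - 1 else F.flow x y with hf₂
  have hf₂zero : ∀ x y, ¬ G.Edge x y → f₂ x y = 0 := by
    intro x y hxy
    by_cases hcond : x = u ∧ y = v
    · exact absurd (hcond.1 ▸ hcond.2 ▸ hE) hxy
    · simp only [hf₂, if_neg hcond]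
      exact F.flow_eq_zero x y hxy
  refine ⟨⟨c₂, f₂, hf₂zero⟩, ⟨u, v, hE, hf, hc, rfl, rfl⟩, ?_, ?_⟩
  · -- excess preserved
    have e1 : (PebbleFlow.mk c₂ f₂ hf₂zero).inflow v + 1 = F.inflow v := by
      simp only [PebbleFlow.inflow]
      rw [← Finset.add_sum_erase Finset.univ _ (Finset.mem_univ u),
        ← Finset.add_sum_erase Finset.univ (fun t => F.flow t v) (Finset.mem_univ u)]
      have htail : ∑ t ∈ Finset.univ.erase u, f₂ t v
          = ∑ t ∈ Finset.univ.erase u, F.flow t v := by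
        refine Finset.sum_congr rfl fun t ht => ?_
        have : t ≠ u := Finset.ne_of_mem_erase ht
        simp [hf₂, this]
      have hhead : f₂ u v = F.flow u v - 1 := by simp [hf₂]
      rw [htail, hhead]
      omega
    have e2 : ∀ x, x ≠ v → (PebbleFlow.mk c₂ f₂ hf₂zero).inflow x = F.inflow x := by
      intro x hx
      simp only [PebbleFlow.inflow]
      refine Finset.sum_congr rfl fun t _ => ?_
      simp [hf₂, hx]
    have e3 : (PebbleFlow.mk c₂ f₂ hf₂zero).woutflow u + G.weight u v = F.woutflow u := by
      simp only [PebbleFlow.woutflow]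
      rw [← Finset.add_sum_erase Finset.univ _ (Finset.mem_univ v),
        ← Finset.add_sum_erase Finset.univ (fun t => G.weight u t * F.flow u t)
          (Finset.mem_univ v)]
      have htail : ∑ t ∈ Finset.univ.erase v, G.weight u t * f₂ u t
          = ∑ t ∈ Finset.univ.erase v, G.weight u t * F.flow u t := by
        refine Finset.sum_congr rfl fun t ht => ?_
        have : t ≠ v := Finset.ne_of_mem_erase ht
        simp [hf₂, this]
      have hhead : f₂ u v = F.flow u v - 1 := by simp [hf₂]
      rw [htail, hhead]
      have : G.weight u v * (F.flow u v - 1) + G.weight u v = G.weight u v * F.flow u v := by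
        have h1 : F.flow u v - 1 + 1 = F.flow u v := by omega
        calc G.weight u v * (F.flow u v - 1) + G.weight u v
            = G.weight u v * (F.flow u v - 1 + 1) := by ring
          _ = G.weight u v * F.flow u v := by rw [h1]
      omega
    have e4 : ∀ x, x ≠ u → (PebbleFlow.mk c₂ f₂ hf₂zero).woutflow x = F.woutflow x := by
      intro x hx
      simp only [PebbleFlow.woutflow]
      refine Finset.sum_congr rfl fun t _ => ?_
      simp [hf₂, hx]
    intro x
    simp only [PebbleFlow.excess]
    by_cases hxu : x = u
    · subst hxu
      have hcx : c₂ x = F.conf x - G.weight x v := by simp [hc₂]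
      have hin := e2 x huv
      rw [hcx, hin]
      have hout := e3
      omega
    · by_cases hxv : x = v
      · subst hxv
        have hcx : c₂ x = F.conf x + 1 := by simp [hc₂, hxu]
        have hout := e4 x hxu
        rw [hcx, hout]
        have hin := e1
        omega
      · have hcx : c₂ x = F.conf x := by simp [hc₂, hxu, hxv]
        rw [hcx, e2 x hxv, e4 x hxu]
  · -- total flow decreases
    have hle : ∀ a b : V, f₂ a b ≤ F.flow a b := by
      intro a b
      show (if a = u ∧ b = v then F.flow u v - 1 else F.flow a b) ≤ F.flow a b
      split
      · next h =>
          obtain ⟨rfl, rfl⟩ := h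
          omega
      · exact le_rfl
    have hlt : f₂ u v < F.flow u v := by
      have hcond : u = u ∧ v = v := ⟨rfl, rfl⟩
      show (if u = u ∧ v = v then F.flow u v - 1 else F.flow u v) < F.flow u v
      rw [if_pos hcond]
      omega
    refine Finset.sum_lt_sum ?_ ⟨u, Finset.mem_univ u, ?_⟩
    · intro a _
      exact Finset.sum_le_sum fun b _ => hle a b
    · exact Finset.sum_lt_sum (fun b _ => hle u b) ⟨v, Finset.mem_univ v, hlt⟩

end Aux

/-- Every feasible pebble flow is realizable. -/
theorem stmt_6 {V : Type} [Fintype V] [DecidableEq V] (G : EWDigraph V)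
    (F : PebbleFlow G) (hF : F.Feasible) : F.Realizable := by
  classical
  suffices H : ∀ n (F : PebbleFlow G), F.Feasible → (∑ u, ∑ v, F.flow u v) ≤ n →
      F.Realizable from H _ F hF le_rfl
  intro n
  induction n with
  | zero =>
    intro F hF hn
    have hzero : ∀ a b, F.flow a b = 0 := by
      intro a b
      have h0 : (∑ u, ∑ v, F.flow u v) = 0 := Nat.le_zero.mp hn
      rw [Finset.sum_eq_zero_iff] at h0
      have := h0 a (Finset.mem_univ a)
      rw [Finset.sum_eq_zero_iff] at this
      exact this b (Finset.mem_univ b)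
    refine ⟨F, Relation.ReflTransGen.refl, fun x => ?_⟩
    simp [PebbleFlow.excess, PebbleFlow.inflow, PebbleFlow.woutflow, hzero]
  | succ n ih =>
    intro F hF hn
    by_cases hreal : F.Realized
    · exact ⟨F, Relation.ReflTransGen.refl, hreal⟩
    · have hstuck : ¬ ∀ u v, u ≠ v → 1 ≤ F.flow u v → F.conf u < G.weight u v :=
        fun h => hreal (realized_of_stuck F hF h)
      push_neg at hstuck
      obtain ⟨u, v, huv, hf1, hc⟩ := hstuck
      have hE : G.Edge u v := edge_of_flow_pos F (by omega)
      obtain ⟨F₂, hstep, hex, hlt⟩ := step_exists F huv hE hf1 hc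
      have hF₂ : F₂.Feasible := fun x => (hex x) ▸ hF x
      obtain ⟨F', hpath, hreal'⟩ := ih F₂ hF₂ (by omega)
      exact ⟨F', Relation.ReflTransGen.head hstep hpath, hreal'⟩
end

section
/- Let G be an edge-weighted digraph, t a vertex, and n ∈ ℕ. If a configuration c on G is n-fold t-solvable, then there is a unidirectional solution: a finite sequence of pebbling steps starting from c and ending in a configuration c* with c*(t) ≥ n, such that for every pair of vertices u, v the sequence never uses a pebbling step along the edge (u,v) and also a pebbling step along the edge (v,u). -/
open Finset

/-- A pebbling step along the specific edge `(u, v)`. -/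
def StepAlong {V : Type} [DecidableEq V] (G : EWDigraph V) (u v : V) (c₁ c₂ : V → ℕ) : Prop :=
  G.Edge u v ∧ G.weight u v ≤ c₁ u ∧
    c₂ = fun w => if w = u then c₁ u - G.weight u v
      else if w = v then c₁ v + 1 else c₁ w

/-- `RunsTo G es c₁ c₂`: the finite sequence of pebbling steps along the listed edges
transforms `c₁` into `c₂`. -/
def RunsTo {V : Type} [DecidableEq V] (G : EWDigraph V) :
    List (V × V) → (V → ℕ) → (V → ℕ) → Prop
  | [], c₁, c₂ => c₁ = c₂
  | e :: es, c₁, c₂ => ∃ c', StepAlong G e.1 e.2 c₁ c' ∧ RunsTo G es c' c₂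

section Aux

variable {V : Type} [DecidableEq V] (G : EWDigraph V)

/-- Formal integer effect of a single move on a vertex. -/
def mcontrib (e : V × V) (v : V) : ℤ :=
  if v = e.1 then -(G.weight e.1 e.2 : ℤ) else if v = e.2 then 1 else 0

/-- Formal result of applying a multiset of moves to a configuration. -/
def mPhi (s : Multiset (V × V)) (c : V → ℕ) (v : V) : ℤ :=
  (c v : ℤ) + (s.map (fun e => mcontrib G e v)).sum

lemma stepAlong_cast {u v : V} {c₁ c₂ : V → ℕ} (h : StepAlong G u v c₁ c₂) (w : V) :
    (c₂ w : ℤ) = (c₁ w : ℤ) + mcontrib G (u, v) w := by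
  obtain ⟨he, hle, rfl⟩ := h
  simp only [mcontrib]
  by_cases h1 : w = u
  · subst h1
    simp [Nat.cast_sub hle]
    ring
  · by_cases h2 : w = v
    · have h3 : ¬ v = u := fun h => h1 (h2.trans h)
      simp [h1, h2, h3]
    · simp [h1, h2]

lemma runsTo_cast {es : List (V × V)} {c₁ c₂ : V → ℕ} (h : RunsTo G es c₁ c₂) (w : V) :
    (c₂ w : ℤ) = mPhi G (↑es) c₁ w := by
  induction es generalizing c₁ with
  | nil =>
    simp only [RunsTo] at h
    subst h
    simp [mPhi]
  | cons e tl ih =>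
    obtain ⟨c', hstep, hrun⟩ := h
    have h1 := ih hrun
    have h2 := stepAlong_cast G hstep w
    simp only [mPhi] at h1 ⊢
    rw [show ((↑(e :: tl) : Multiset (V × V))) = e ::ₘ (↑tl : Multiset (V × V)) from rfl,
      Multiset.map_cons, Multiset.sum_cons]
    rw [h1, h2]
    ring

lemma exists_runsTo {c c₂ : V → ℕ} (h : Relation.ReflTransGen G.Step c c₂) :
    ∃ es : List (V × V), RunsTo G es c c₂ ∧ ∀ e ∈ es, G.Edge e.1 e.2 := by
  induction h using Relation.ReflTransGen.head_induction_on with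
  | refl => exact ⟨[], rfl, by simp⟩
  | head hstep _ ih =>
    obtain ⟨es, hr, he⟩ := ih
    obtain ⟨u, v, hedge, hle, hc⟩ := hstep
    refine ⟨(u, v) :: es, ⟨_, ⟨hedge, hle, hc⟩, hr⟩, ?_⟩
    rintro e he'
    rcases List.mem_cons.mp he' with rfl | h
    · exact hedge
    · exact he _ h

/-- Extract a nonempty "cycle" sub-multiset whose formal contribution is nonpositive
everywhere, assuming every source has an incoming move. -/
lemma exists_cycle (s : Multiset (V × V)) (hs : s ≠ 0)
    (hedges : ∀ e ∈ s, G.Edge e.1 e.2)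
    (hin : ∀ e ∈ s, ∃ e' ∈ s, e'.2 = e.1) :
    ∃ q : Multiset (V × V), q ≤ s ∧ q ≠ 0 ∧
      ∀ v, ((q.map (fun e => mcontrib G e v)).sum : ℤ) ≤ 0 := by
  classical
  obtain ⟨e₀, he₀⟩ := Multiset.exists_mem_of_ne_zero hs
  -- backward chain function
  have key : ∀ x : {e : V × V // e ∈ s}, ∃ y : {e : V × V // e ∈ s}, (y : V × V).2 = (x : V × V).1 := by
    rintro ⟨e, he⟩
    obtain ⟨e', he', heq⟩ := hin e he
    exact ⟨⟨e', he'⟩, heq⟩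
  choose H hH using key
  set g : ℕ → V × V := fun n => ((H^[n] ⟨e₀, he₀⟩ : {e : V × V // e ∈ s}) : V × V) with hg
  have hgs : ∀ n, g n ∈ s := fun n => (H^[n] ⟨e₀, he₀⟩).2
  have hgsucc : ∀ n, (g (n + 1)).2 = (g n).1 := by
    intro n
    simp only [hg, Function.iterate_succ_apply']
    exact hH _
  -- pigeonhole
  have hcard : (s.toFinset.card : ℕ) < (Finset.range (Multiset.card s + 1)).card := by
    simp only [Finset.card_range]
    exact Nat.lt_succ_of_le s.toFinset_card_le
  obtain ⟨a, _, b, _, hab, heqab⟩ :=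
    Finset.exists_ne_map_eq_of_card_lt_of_maps_to hcard
      (f := fun n => g n) (fun n _ => Multiset.mem_toFinset.mpr (hgs n))
  have hP : ∃ j, ∃ i, i < j ∧ g i = g j := by
    rcases lt_or_gt_of_ne hab with h | h
    · exact ⟨b, a, h, heqab⟩
    · exact ⟨a, b, h, heqab.symm⟩
  set j := Nat.find hP with hj
  obtain ⟨i, hij, hgij⟩ := Nat.find_spec hP
  have hmin : ∀ j' < j, ¬ ∃ i, i < j' ∧ g i = g j' := fun j' h => Nat.find_min hP h
  refine ⟨(Finset.Ico i j).val.map g, ?_, ?_, ?_⟩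
  · -- q ≤ s
    have hnodup : ((Finset.Ico i j).val.map g).Nodup := by
      refine Multiset.Nodup.map_on ?_ (Finset.Ico i j).nodup
      intro a ha b hb hgab
      by_contra hne
      rcases lt_or_gt_of_ne hne with h | h
      · exact hmin b (Finset.mem_Ico.mp hb).2 ⟨a, h, hgab⟩
      · exact hmin a (Finset.mem_Ico.mp ha).2 ⟨b, h, hgab.symm⟩
    rw [Multiset.le_iff_count]
    intro e
    rcases Nat.eq_zero_or_pos (Multiset.count e ((Finset.Ico i j).val.map g)) with h | h
    · omega
    · have he : e ∈ (Finset.Ico i j).val.map g := Multiset.count_pos.mp h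
      have hes : e ∈ s := by
        obtain ⟨k, _, rfl⟩ := Multiset.mem_map.mp he
        exact hgs k
      have h1 : Multiset.count e ((Finset.Ico i j).val.map g) ≤ 1 :=
        Multiset.nodup_iff_count_le_one.mp hnodup e
      have h2 : 1 ≤ Multiset.count e s := Multiset.one_le_count_iff_mem.mpr hes
      omega
  · -- q ≠ 0
    intro h
    have hmem : g i ∈ (Finset.Ico i j).val.map g :=
      Multiset.mem_map_of_mem g (Finset.mem_Ico.mpr ⟨le_rfl, hij⟩)
    rw [h] at hmem
    exact Multiset.notMem_zero _ hmem
  · -- sum bound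
    intro v
    have hsum : ((Finset.Ico i j).val.map g).map (fun e => mcontrib G e v)
        = (Finset.Ico i j).val.map (fun k => mcontrib G (g k) v) := by
      rw [Multiset.map_map]; rfl
    rw [hsum]
    have hI : ((Finset.Ico i j).val.map (fun k => mcontrib G (g k) v)).sum
        = ∑ k ∈ Finset.Ico i j, mcontrib G (g k) v := rfl
    rw [hI]
    -- per-element bound
    have hbd : ∀ k ∈ Finset.Ico i j, mcontrib G (g k) v ≤
        (if v = (g k).2 then 1 else 0) - 2 * (if v = (g k).1 then 1 else 0) := by
      intro k _
      have hw : 2 ≤ G.weight (g k).1 (g k).2 := G.weight_ge _ _ (hedges _ (hgs k))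
      simp only [mcontrib]
      split_ifs <;> push_cast <;> omega
    have hineq := Finset.sum_le_sum hbd
    rw [Finset.sum_sub_distrib] at hineq
    -- in = out over the cycle
    have hshift : (∑ k ∈ Finset.Ico i j, (if v = (g k).1 then (1 : ℤ) else 0))
        = ∑ k ∈ Finset.Ico i j, (if v = (g k).2 then (1 : ℤ) else 0) := by
      have h1 : ∀ k, (if v = (g k).1 then (1 : ℤ) else 0) = (if v = (g (k+1)).2 then 1 else 0) := by
        intro k; rw [hgsucc k]
      calc (∑ k ∈ Finset.Ico i j, (if v = (g k).1 then (1 : ℤ) else 0))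
          = ∑ k ∈ Finset.Ico i j, (if v = (g (k+1)).2 then (1 : ℤ) else 0) := by
            exact Finset.sum_congr rfl (fun k _ => h1 k)
        _ = ∑ k ∈ Finset.range (j - i), (if v = (g (i + k + 1)).2 then (1 : ℤ) else 0) := by
            rw [Finset.sum_Ico_eq_sum_range]
        _ = ∑ k ∈ Finset.range (j - i), (if v = (g (i + k)).2 then (1 : ℤ) else 0) := by
            set m := j - i with hm
            set a : ℕ → ℤ := fun k => (if v = (g (i + k)).2 then (1 : ℤ) else 0) with ha
            have h0 : ∀ k, (if v = (g (i + k + 1)).2 then (1 : ℤ) else 0) = a (k + 1) := by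
              intro k
              simp only [ha]
              rw [Nat.add_assoc]
            rw [Finset.sum_congr rfl (fun k _ => h0 k)]
            have hs1 : ∑ k ∈ Finset.range m, a (k + 1) = (∑ k ∈ Finset.range (m + 1), a k) - a 0 := by
              rw [Finset.sum_range_succ']
              ring
            have hs2 : ∑ k ∈ Finset.range (m + 1), a k = (∑ k ∈ Finset.range m, a k) + a m := by
              rw [Finset.sum_range_succ]
            have him : i + m = j := by omega
            have ha0 : a 0 = a m := by
              simp only [ha, Nat.add_zero, him, hgij]
              rfl
            rw [hs1, hs2, ha0]
            ring
        _ = ∑ k ∈ Finset.Ico i j, (if v = (g k).2 then (1 : ℤ) else 0) := by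
            rw [Finset.sum_Ico_eq_sum_range]
      
    calc (∑ k ∈ Finset.Ico i j, mcontrib G (g k) v)
        ≤ (∑ k ∈ Finset.Ico i j, (if v = (g k).2 then (1:ℤ) else 0))
          - ∑ k ∈ Finset.Ico i j, 2 * (if v = (g k).1 then (1:ℤ) else 0) := hineq
      _ = (∑ k ∈ Finset.Ico i j, (if v = (g k).2 then (1:ℤ) else 0))
          - 2 * ∑ k ∈ Finset.Ico i j, (if v = (g k).1 then (1:ℤ) else 0) := by
            rw [Finset.mul_sum]
      _ = - ∑ k ∈ Finset.Ico i j, (if v = (g k).2 then (1:ℤ) else 0) := by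
            rw [hshift]; ring
      _ ≤ 0 := by
            have : (0:ℤ) ≤ ∑ k ∈ Finset.Ico i j, (if v = (g k).2 then (1:ℤ) else 0) :=
              Finset.sum_nonneg (fun k _ => by positivity)
            omega

end Aux

section Main

variable {V : Type} [DecidableEq V] (G : EWDigraph V)

lemma multiset_sum_nonpos {α : Type} (s : Multiset α) (f : α → ℤ)
    (h : ∀ a ∈ s, f a ≤ 0) : (s.map f).sum ≤ 0 := by
  induction s using Multiset.induction with
  | empty => simp
  | cons a t ih =>
    simp only [Multiset.map_cons, Multiset.sum_cons]
    have h1 := h a (Multiset.mem_cons_self a t)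
    have h2 := ih (fun b hb => h b (Multiset.mem_cons_of_mem hb))
    omega

lemma main_lemma : ∀ (N : ℕ) (s : Multiset (V × V)), Multiset.card s ≤ N →
    (∀ e ∈ s, G.Edge e.1 e.2) → ∀ c : V → ℕ, (∀ v, 0 ≤ mPhi G s c v) →
    ∃ (es : List (V × V)) (c₂ : V → ℕ), RunsTo G es c c₂ ∧
      (∀ v, mPhi G s c v ≤ (c₂ v : ℤ)) ∧ (∀ e ∈ es, e ∈ s) ∧
      ∀ u v : V, (u, v) ∈ es → (v, u) ∉ es := by
  intro N
  induction N with
  | zero =>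
    intro s hcard hedges c hpos
    have hs : s = 0 := Multiset.card_eq_zero.mp (Nat.le_zero.mp hcard)
    subst hs
    exact ⟨[], c, rfl, fun v => by simp [mPhi], by simp, by simp⟩
  | succ N ih =>
    intro s hcard hedges c hpos
    rcases eq_or_ne s 0 with rfl | hs
    · exact ⟨[], c, rfl, fun v => by simp [mPhi], by simp, by simp⟩
    by_cases hsrc : ∃ e ∈ s, ∀ x : V, (x, e.1) ∉ s
    · -- source case
      obtain ⟨⟨u, v⟩, hes, hclean⟩ := hsrc
      simp only at hclean
      have hedge : G.Edge u v := hedges _ hes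
      have hw2 : 2 ≤ G.weight u v := G.weight_ge u v hedge
      -- feasibility of the move (u, v)
      have hrest : ∀ e' ∈ s.erase (u, v), mcontrib G e' u ≤ 0 := by
        intro e' he'
        have he's : e' ∈ s := Multiset.mem_of_mem_erase he'
        simp only [mcontrib]
        split_ifs with h1 h2
        · omega
        · exfalso
          exact hclean e'.1 (by rw [h2]; exact he's)
        · exact le_rfl
      have hsumrest : ((s.erase (u, v)).map (fun e => mcontrib G e u)).sum ≤ 0 := by
        exact multiset_sum_nonpos _ _ hrest
      have hfeas : G.weight u v ≤ c u := by
        have h0 := hpos u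
        simp only [mPhi] at h0
        have hc : s = (u, v) ::ₘ s.erase (u, v) := (Multiset.cons_erase hes).symm
        rw [hc, Multiset.map_cons, Multiset.sum_cons] at h0
        have hcu : mcontrib G ((u, v) : V × V) u = -(G.weight u v : ℤ) := by
          simp [mcontrib]
        rw [hcu] at h0
        have : (G.weight u v : ℤ) ≤ (c u : ℤ) := by omega
        exact_mod_cast this
      set c₁ : V → ℕ := fun w => if w = u then c u - G.weight u v
        else if w = v then c v + 1 else c w with hc₁
      have hstep : StepAlong G u v c c₁ := ⟨hedge, hfeas, rfl⟩
      have hkey : ∀ w, mPhi G (s.erase (u, v)) c₁ w = mPhi G s c w := by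
        intro w
        have h1 := stepAlong_cast G hstep w
        simp only [mPhi]
        rw [h1]
        have hc : s = (u, v) ::ₘ s.erase (u, v) := (Multiset.cons_erase hes).symm
        conv_rhs => rw [hc]
        rw [Multiset.map_cons, Multiset.sum_cons]
        ring
      have hcard' : Multiset.card (s.erase (u, v)) ≤ N := by
        have h1 := Multiset.card_erase_of_mem hes
        have h2 : 0 < Multiset.card s := Multiset.card_pos.mpr hs
        rw [Nat.pred_eq_sub_one] at h1
        omega
      obtain ⟨es', c₂, hrun', hle', hmem', huni'⟩ := ih (s.erase (u, v)) hcard'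
        (fun e he => hedges e (Multiset.mem_of_mem_erase he)) c₁
        (fun w => by rw [hkey w]; exact hpos w)
      have huv : u ≠ v := by
        intro h
        exact hclean u (by rw [← h] at hes; exact hes)
      refine ⟨(u, v) :: es', c₂, ⟨c₁, hstep, hrun'⟩, fun w => by rw [← hkey w]; exact hle' w,
        ?_, ?_⟩
      · intro e he
        rcases List.mem_cons.mp he with rfl | h
        · exact hes
        · exact Multiset.mem_of_mem_erase (hmem' e h)
      · intro a b hab hba
        rcases List.mem_cons.mp hab with hab1 | hab2
        · -- (a, b) = (u, v)
          have ha : a = u := congrArg Prod.fst hab1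
          have hb : b = v := congrArg Prod.snd hab1
          rcases List.mem_cons.mp hba with hba1 | hba2
          · apply huv
            have hb2 : b = u := congrArg Prod.fst hba1
            rw [← hb2]
            exact hb
          · have : (b, a) ∈ s := Multiset.mem_of_mem_erase (hmem' _ hba2)
            rw [ha] at this
            exact hclean b this
        · rcases List.mem_cons.mp hba with hba1 | hba2
          · have hb : b = u := congrArg Prod.fst hba1
            have : (a, b) ∈ s := Multiset.mem_of_mem_erase (hmem' _ hab2)
            rw [hb] at this
            exact hclean a this
          · exact huni' a b hab2 hba2
    · -- cycle case
      push_neg at hsrc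
      have hin : ∀ e ∈ s, ∃ e' ∈ s, e'.2 = e.1 := by
        intro e he
        obtain ⟨x, hx⟩ := hsrc e he
        exact ⟨(x, e.1), hx, rfl⟩
      obtain ⟨q, hqs, hq0, hqsum⟩ := exists_cycle G s hs hedges hin
      obtain ⟨r, hr⟩ := Multiset.le_iff_exists_add.mp hqs
      have hcards : Multiset.card s = Multiset.card q + Multiset.card r := by
        rw [hr, Multiset.card_add]
      have hq1 : 0 < Multiset.card q := Multiset.card_pos.mpr hq0
      have hphi : ∀ v, mPhi G s c v ≤ mPhi G r c v := by
        intro v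
        simp only [mPhi, hr, Multiset.map_add, Multiset.sum_add]
        have := hqsum v
        omega
      obtain ⟨es, c₂, hrun, hle, hmem, huni⟩ := ih r (by omega)
        (fun e he => hedges e (by rw [hr]; exact Multiset.mem_add.mpr (Or.inr he))) c
        (fun v => le_trans (hpos v) (hphi v))
      exact ⟨es, c₂, hrun, fun v => le_trans (hphi v) (hle v),
        fun e he => by rw [hr]; exact Multiset.mem_add.mpr (Or.inr (hmem e he)), huni⟩

end Main

/-- If `c` is `n`-fold `t`-solvable then there is a unidirectional solution: a sequence
of pebbling steps from `c` putting `n` pebbles on `t` that never uses both an edge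
`(u,v)` and the reverse edge `(v,u)`. -/
theorem stmt_7 {V : Type} [DecidableEq V] (G : EWDigraph V) (t : V) (n : ℕ) (c : V → ℕ)
    (h : G.Solvable n t c) :
    ∃ (es : List (V × V)) (c' : V → ℕ), RunsTo G es c c' ∧ n ≤ c' t ∧
      ∀ u v : V, (u, v) ∈ es → (v, u) ∉ es := by
  obtain ⟨cf, hrt, hn⟩ := h
  obtain ⟨es0, hrun0, hedges0⟩ := exists_runsTo G hrt
  have hcast := runsTo_cast G hrun0
  set S : Multiset (V × V) := (↑es0 : Multiset (V × V)) with hS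
  have hpos : ∀ v, 0 ≤ mPhi G S c v := by
    intro v
    rw [← hcast v]
    exact Int.natCast_nonneg _
  obtain ⟨es, c₂, hrun, hle, _, huni⟩ := main_lemma G (Multiset.card S) S le_rfl
    (fun e he => hedges0 e (Multiset.mem_coe.mp he)) c hpos
  refine ⟨es, c₂, hrun, ?_, huni⟩
  have h1 : (n : ℤ) ≤ (cf t : ℤ) := by exact_mod_cast hn
  have h2 : (cf t : ℤ) ≤ (c₂ t : ℤ) := by rw [hcast t]; exact hle t
  exact_mod_cast le_trans h1 h2
end

section
/- Let G be an edge-weighted digraph with a vertex t, and let k, l ∈ ℕ with 2 ≤ k ≤ l. If π(G,t) ≤ p and τ_{2,l}(G,t) ≤ 2p, then π(↓^(k) □ G, (1,t)) ≤ k·p. -/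
open Finset

open Classical in
/-- The Cartesian product `G □ H` of edge-weighted digraphs. -/
noncomputable def EWDigraph.box {V W : Type} (G : EWDigraph V) (H : EWDigraph W) :
    EWDigraph (V × W) where
  Edge p q := (G.Edge p.1 q.1 ∧ p.2 = q.2) ∨ (H.Edge p.2 q.2 ∧ p.1 = q.1)
  weight p q := if G.Edge p.1 q.1 ∧ p.2 = q.2 then G.weight p.1 q.1 else H.weight p.2 q.2
  weight_ge := by
    intro p q h
    try dsimp only
    by_cases hc : G.Edge p.1 q.1 ∧ p.2 = q.2
    · rw [if_pos hc]; exact G.weight_ge _ _ hc.1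
    · rw [if_neg hc]
      rcases h with ⟨h1, h2⟩ | ⟨h1, h2⟩
      · exact absurd ⟨h1, h2⟩ hc
      · exact H.weight_ge _ _ h1

/-- The arrow graph `↓^(k)`: vertices `0` and `1` with a single edge `(0,1)` of weight `k`. -/
def arrowGraph (k : ℕ) (hk : 2 ≤ k) : EWDigraph (Fin 2) where
  Edge u v := u = 0 ∧ v = 1
  weight _ _ := k
  weight_ge _ _ _ := hk

namespace Aux
open EWDigraph

variable {W : Type} [DecidableEq W] {G : EWDigraph W}

lemma step_add {c₁ c₂ d : W → ℕ} (h : G.Step c₁ c₂) :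
    G.Step (fun w => c₁ w + d w) (fun w => c₂ w + d w) := by
  obtain ⟨u, v, he, hw, hc⟩ := h
  refine ⟨u, v, he, le_trans hw (Nat.le_add_right _ _), ?_⟩
  subst hc
  funext w
  beta_reduce
  by_cases h1 : w = u
  · subst h1
    rw [if_pos rfl, if_pos rfl]
    omega
  · rw [if_neg h1, if_neg h1]
    by_cases h2 : w = v
    · subst h2
      rw [if_pos rfl, if_pos rfl]
      omega
    · rw [if_neg h2, if_neg h2]

lemma reach_add {c c' d : W → ℕ} (h : Relation.ReflTransGen G.Step c c') :
    Relation.ReflTransGen G.Step (fun w => c w + d w) (fun w => c' w + d w) := by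
  induction h with
  | refl => exact Relation.ReflTransGen.refl
  | tail _ hstep ih => exact ih.tail (step_add hstep)

lemma solvable_add {n m : ℕ} {t : W} {c d : W → ℕ} (hc : G.Solvable n t c)
    (hd : G.Solvable m t d) : G.Solvable (n + m) t (fun w => c w + d w) := by
  obtain ⟨r, hr, hn⟩ := hc
  obtain ⟨r', hr', hm⟩ := hd
  refine ⟨fun w => r w + r' w, ?_, by simpa using Nat.add_le_add hn hm⟩
  have h1 := reach_add (d := d) hr
  have h2 := reach_add (d := r) hr'
  refine h1.trans ?_
  have e1 : (fun w => r w + d w) = (fun w => d w + r w) := by funext w; omega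
  have e2 : (fun w => r w + r' w) = (fun w => r' w + r w) := by funext w; omega
  rw [e1, e2]; exact h2

lemma solvable_le {n : ℕ} {t : W} {c c' : W → ℕ} (h : ∀ w, c' w ≤ c w)
    (hs : G.Solvable n t c') : G.Solvable n t c := by
  have h0 : G.Solvable 0 t (fun w => c w - c' w) :=
    ⟨_, Relation.ReflTransGen.refl, Nat.zero_le _⟩
  have h2 := solvable_add hs h0
  have e : (fun w => c' w + (c w - c' w)) = c := by funext w; have := h w; omega
  rwa [e, Nat.add_zero] at h2

lemma solvable_of_reach {n : ℕ} {t : W} {c c' : W → ℕ}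
    (h : Relation.ReflTransGen G.Step c c') (hs : G.Solvable n t c') : G.Solvable n t c := by
  obtain ⟨r, hr, hn⟩ := hs
  exact ⟨r, h.trans hr, hn⟩

end Aux

section Sel
open EWDigraph Aux

variable {W : Type} [DecidableEq W] [Fintype W] {G : EWDigraph W}

omit [DecidableEq W] in
lemma supp_mono {c d : W → ℕ} (h : ∀ w, c w ≤ d w) : supp c ≤ supp d := by
  apply Finset.card_le_card
  intro w hw
  simp only [Finset.mem_filter, Finset.mem_univ, true_and] at *
  exact lt_of_lt_of_le hw (h w)

lemma exists_sub (c : W → ℕ) (N : ℕ) (hN : N ≤ ∑ w, c w) :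
    ∃ e : W → ℕ, (∀ w, e w ≤ c w) ∧ (∑ w, e w = N) ∧ min (supp c) N ≤ supp e := by
  induction N with
  | zero => exact ⟨fun _ => 0, fun w => Nat.zero_le _, by simp, by simp⟩
  | succ N ih =>
    obtain ⟨e, hle, hsum, hsupp⟩ := ih (le_trans (Nat.le_succ N) hN)
    have hex : ∃ w, e w < c w := by
      by_contra hco
      push_neg at hco
      have h2 : ∑ w, c w ≤ ∑ w, e w := Finset.sum_le_sum fun w _ => hco w
      omega
    have key : ∀ v : W, e v < c v → ∃ e' : W → ℕ, (∀ w, e' w ≤ c w) ∧ (∑ w, e' w = N + 1)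
        ∧ supp e ≤ supp e' ∧ (e v = 0 → supp e + 1 ≤ supp e') := by
      intro v hv
      refine ⟨fun w => if w = v then e w + 1 else e w, ?_, ?_, ?_, ?_⟩
      · intro w
        beta_reduce
        by_cases hw : w = v
        · subst hw; simp only [if_true, reduceIte]; omega
        · simp only [if_neg hw]; exact hle w
      · have : (fun w => if w = v then e w + 1 else e w) = fun w => e w + (if w = v then 1 else 0) := by
          funext w; by_cases hw : w = v <;> simp [hw]
        rw [this, Finset.sum_add_distrib, hsum, Finset.sum_ite_eq' Finset.univ v (fun _ => 1)]
        simp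
      · apply supp_mono
        intro w
        by_cases hw : w = v <;> simp [hw]
      · intro hev
        have hsub : insert v (Finset.univ.filter fun w => 0 < e w) ⊆
            Finset.univ.filter fun w => 0 < (if w = v then e w + 1 else e w) := by
          intro w hw
          rcases Finset.mem_insert.mp hw with hw | hw
          · subst hw; simp
          · simp only [Finset.mem_filter, Finset.mem_univ, true_and] at hw ⊢
            by_cases hwv : w = v <;> simp [hwv] <;> omega
        have hnm : v ∉ (Finset.univ.filter fun w => 0 < e w) := by simp [hev]
        have := Finset.card_le_card hsub
        rw [Finset.card_insert_of_notMem hnm] at this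
        exact this
    by_cases hcase : supp e < supp c
    · obtain ⟨v, hv, hvn⟩ := Finset.not_subset.mp
        (fun hsub => absurd (Finset.card_le_card hsub) (Nat.not_le.mpr hcase))
      simp only [Finset.mem_filter, Finset.mem_univ, true_and] at hv hvn
      push_neg at hvn
      have hev : e v = 0 := by omega
      obtain ⟨e', h1', h2', h3', h4'⟩ := key v (by omega)
      exact ⟨e', h1', h2', by have := h4' hev; omega⟩
    · obtain ⟨v, hv⟩ := hex
      obtain ⟨e', h1', h2', h3', -⟩ := key v hv
      exact ⟨e', h1', h2', by omega⟩

lemma chunk {t : W} {p : ℕ} (h1 : G.PiBound 1 t p) :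
    ∀ (j : ℕ) (c : W → ℕ), j * p ≤ ∑ w, c w → G.Solvable j t c := by
  intro j
  induction j with
  | zero => exact fun c _ => ⟨c, Relation.ReflTransGen.refl, Nat.zero_le _⟩
  | succ j ih =>
    intro c hc
    have hp : p ≤ ∑ w, c w := by
      have : p ≤ (j + 1) * p := Nat.le_mul_of_pos_left p (Nat.succ_pos j)
      omega
    obtain ⟨e, hle, hsum, -⟩ := exists_sub c p hp
    have hrest : j * p ≤ ∑ w, (c w - e w) := by
      have hsplit : ∑ w, ((c w - e w) + e w) = ∑ w, c w :=
        Finset.sum_congr rfl fun w _ => by have := hle w; omega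
      rw [Finset.sum_add_distrib, hsum] at hsplit
      have : (j + 1) * p = j * p + p := by ring
      omega
    have hse : G.Solvable 1 t e := h1 e (le_of_eq hsum.symm)
    have hsr : G.Solvable j t (fun w => c w - e w) := ih _ hrest
    have := solvable_add hse hsr
    have ec : (fun w => e w + (c w - e w)) = c := by
      funext w; have := hle w; omega
    rw [ec] at this
    simpa [Nat.add_comm] using this

end Sel

section Prod
open EWDigraph Aux

lemma fin2 : ∀ j : Fin 2, j = 0 ∨ j = 1 := by decide

variable {V : Type} [DecidableEq V] {G : EWDigraph V} {k : ℕ} {hk : 2 ≤ k}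

def emb {V : Type} (i : Fin 2) (d : V → ℕ) : Fin 2 × V → ℕ :=
  fun q => if q.1 = i then d q.2 else 0

lemma weight_copy (i : Fin 2) (u v : V) :
    ((arrowGraph k hk).box G).weight (i, u) (i, v) = G.weight u v := by
  have hno : ¬((arrowGraph k hk).Edge i i ∧ u = v) := by
    rintro ⟨⟨h0, h1⟩, -⟩
    rw [h0] at h1
    exact absurd h1 (by decide)
  exact if_neg hno

lemma weight_cross (v : V) :
    ((arrowGraph k hk).box G).weight ((0 : Fin 2), v) ((1 : Fin 2), v) = k := by
  have hyes : (arrowGraph k hk).Edge (0 : Fin 2) 1 ∧ v = v := ⟨⟨rfl, rfl⟩, rfl⟩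
  exact if_pos hyes

lemma lift_step {i : Fin 2} {c₁ c₂ : V → ℕ} (h : G.Step c₁ c₂) :
    ((arrowGraph k hk).box G).Step (emb i c₁) (emb i c₂) := by
  obtain ⟨u, v, he, hw, hc⟩ := h
  refine ⟨(i, u), (i, v), Or.inr ⟨he, rfl⟩, ?_, ?_⟩
  · rw [weight_copy]
    simpa [emb] using hw
  · subst hc
    rw [weight_copy]
    funext q
    obtain ⟨j, w⟩ := q
    simp only [emb, Prod.mk.injEq]
    by_cases hji : j = i
    · subst hji
      simp only [if_pos rfl, true_and]
      by_cases hwu : w = u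
      · subst hwu
        simp
      · rw [if_neg hwu, if_neg hwu]
        by_cases hwv : w = v
        · subst hwv; simp
        · rw [if_neg hwv, if_neg hwv]
    · simp [hji]

lemma lift_reach {i : Fin 2} {c r : V → ℕ} (h : Relation.ReflTransGen G.Step c r) :
    Relation.ReflTransGen ((arrowGraph k hk).box G).Step (emb i c) (emb i r) := by
  induction h with
  | refl => exact Relation.ReflTransGen.refl
  | tail _ hstep ih => exact ih.tail (lift_step hstep)

lemma lift_solvable {i : Fin 2} {n : ℕ} {t : V} {c : V → ℕ} (h : G.Solvable n t c) :
    ((arrowGraph k hk).box G).Solvable n (i, t) (emb i c) := by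
  obtain ⟨r, hr, hn⟩ := h
  exact ⟨emb i r, lift_reach hr, by simpa [emb] using hn⟩

lemma cross_step {c : Fin 2 × V → ℕ} {v : V} (hc : k ≤ c (0, v)) :
    ((arrowGraph k hk).box G).Step c
      (fun q => if q = ((0 : Fin 2), v) then c (0, v) - k
        else if q = ((1 : Fin 2), v) then c (1, v) + 1 else c q) := by
  refine ⟨((0 : Fin 2), v), ((1 : Fin 2), v), Or.inl ⟨⟨rfl, rfl⟩, rfl⟩, ?_, ?_⟩
  · rw [weight_cross]; exact hc
  · rw [weight_cross]

lemma push_reach (v : V) : ∀ (n : ℕ) (c : Fin 2 × V → ℕ), n * k ≤ c (0, v) →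
    Relation.ReflTransGen ((arrowGraph k hk).box G).Step c
      (fun q => if q = ((0 : Fin 2), v) then c (0, v) - n * k
        else if q = ((1 : Fin 2), v) then c (1, v) + n else c q) := by
  intro n
  induction n with
  | zero =>
    intro c _
    have : (fun q => if q = ((0 : Fin 2), v) then c (0, v) - 0 * k
        else if q = ((1 : Fin 2), v) then c (1, v) + 0 else c q) = c := by
      funext q
      by_cases h0 : q = ((0 : Fin 2), v)
      · subst h0; simp
      · by_cases h1 : q = ((1 : Fin 2), v)
        · subst h1; simp
        · rw [if_neg h0, if_neg h1]
    rw [this]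
  | succ n ih =>
    intro c hc
    have hkc : k ≤ c (0, v) := by
      have : k ≤ (n + 1) * k := Nat.le_mul_of_pos_left k (Nat.succ_pos n)
      omega
    have hstep := cross_step (G := G) (hk := hk) hkc
    set c₁ : Fin 2 × V → ℕ := fun q => if q = ((0 : Fin 2), v) then c (0, v) - k
        else if q = ((1 : Fin 2), v) then c (1, v) + 1 else c q with hc₁
    have hc₁0 : c₁ (0, v) = c (0, v) - k := by simp [hc₁]
    have hc₁1 : c₁ (1, v) = c (1, v) + 1 := by
      simp [hc₁]
    have hrest := ih c₁ (by
      rw [hc₁0]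
      have h5 : (n + 1) * k = n * k + k := by ring
      omega)
    have hfin : (fun q => if q = ((0 : Fin 2), v) then c₁ (0, v) - n * k
        else if q = ((1 : Fin 2), v) then c₁ (1, v) + n else c₁ q) =
        (fun q => if q = ((0 : Fin 2), v) then c (0, v) - (n + 1) * k
          else if q = ((1 : Fin 2), v) then c (1, v) + (n + 1) else c q) := by
      funext q
      by_cases h0 : q = ((0 : Fin 2), v)
      · subst h0
        rw [if_pos rfl, if_pos rfl, hc₁0]
        have : (n + 1) * k = n * k + k := by ring
        omega
      · by_cases h1 : q = ((1 : Fin 2), v)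
        · subst h1
          rw [if_neg h0, if_neg h0, if_pos rfl, if_pos rfl, hc₁1]
          omega
        · rw [if_neg h0, if_neg h0, if_neg h1, if_neg h1]
          simp only [hc₁]
          rw [if_neg h0, if_neg h1]
    rw [hfin] at hrest
    exact Relation.ReflTransGen.head hstep hrest

end Prod

section PushAll
open EWDigraph Aux

variable {V : Type} [DecidableEq V] {G : EWDigraph V} {k : ℕ} {hk : 2 ≤ k}

lemma push_all [Fintype V] (cB cT : V → ℕ) :
    Relation.ReflTransGen ((arrowGraph k hk).box G).Step
      (fun q => if q.1 = 0 then cB q.2 else cT q.2)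
      (fun q => if q.1 = 0 then cB q.2 % k else cT q.2 + cB q.2 / k) := by
  suffices h : ∀ S : Finset V,
      Relation.ReflTransGen ((arrowGraph k hk).box G).Step
        (fun q => if q.1 = 0 then cB q.2 else cT q.2)
        (fun q => if q.2 ∈ S then (if q.1 = 0 then cB q.2 % k else cT q.2 + cB q.2 / k)
          else (if q.1 = 0 then cB q.2 else cT q.2)) by
    have h2 := h Finset.univ
    simpa using h2
  intro S
  induction S using Finset.induction_on with
  | empty =>
    have e : (fun q : Fin 2 × V => if q.2 ∈ (∅ : Finset V)
        then (if q.1 = 0 then cB q.2 % k else cT q.2 + cB q.2 / k)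
        else (if q.1 = 0 then cB q.2 else cT q.2)) =
        (fun q : Fin 2 × V => if q.1 = 0 then cB q.2 else cT q.2) := by
      funext q; simp
    rw [e]
  | @insert v S hv ih =>
    set mid : Fin 2 × V → ℕ := fun q => if q.2 ∈ S
        then (if q.1 = 0 then cB q.2 % k else cT q.2 + cB q.2 / k)
        else (if q.1 = 0 then cB q.2 else cT q.2) with hmid
    have hmid0 : mid ((0 : Fin 2), v) = cB v := by simp [hmid, hv]
    have hmid1 : mid ((1 : Fin 2), v) = cT v := by simp [hmid, hv]
    have hdiv : (cB v / k) * k ≤ mid ((0 : Fin 2), v) := by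
      rw [hmid0]; exact Nat.div_mul_le_self _ _
    have hpush := push_reach (G := G) (hk := hk) v (cB v / k) mid hdiv
    refine ih.trans ?_
    have e : (fun q => if q = ((0 : Fin 2), v) then mid (0, v) - (cB v / k) * k
        else if q = ((1 : Fin 2), v) then mid (1, v) + cB v / k else mid q) =
        (fun q : Fin 2 × V => if q.2 ∈ insert v S
          then (if q.1 = 0 then cB q.2 % k else cT q.2 + cB q.2 / k)
          else (if q.1 = 0 then cB q.2 else cT q.2)) := by
      funext q
      obtain ⟨j, w⟩ := q
      by_cases hwv : w = v
      · subst hwv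
        rcases fin2 j with rfl | rfl
        · rw [if_pos rfl, hmid0]
          have hmod : cB w % k + cB w / k * k = cB w := Nat.mod_add_div' _ _
          have : cB w - cB w / k * k = cB w % k := Nat.sub_eq_of_eq_add hmod.symm
          rw [this]
          simp
        · rw [if_neg (by simp), if_pos rfl, hmid1]
          simp
      · have hne0 : (j, w) ≠ ((0 : Fin 2), v) := by simp [hwv]
        have hne1 : (j, w) ≠ ((1 : Fin 2), v) := by simp [hwv]
        rw [if_neg hne0, if_neg hne1]
        have : ((j, w) : Fin 2 × V).2 ∈ insert v S ↔ ((j, w) : Fin 2 × V).2 ∈ S := by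
          simp [Finset.mem_insert, hwv]
        simp only [hmid]
        rw [if_congr this rfl rfl]
    rw [e] at hpush
    exact hpush

end PushAll

/-- If `π(G,t) ≤ p` and `τ_{2,l}(G,t) ≤ 2p` with `2 ≤ k ≤ l`, then
`π(↓^(k) □ G, (1,t)) ≤ k·p`. -/
theorem stmt_9 {V : Type} [Fintype V] [DecidableEq V] (G : EWDigraph V) (t : V)
    (k l p : ℕ) (hk : 2 ≤ k) (hkl : k ≤ l)
    (h1 : G.PiBound 1 t p) (h2 : G.TauBound 2 l t (2 * p)) :
    ((arrowGraph k hk).box G).PiBound 1 ((1 : Fin 2), t) (k * p) := by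
  intro c hc
  classical
  open EWDigraph Aux in
  set cB : V → ℕ := fun v => c (0, v) with hcB
  set cT : V → ℕ := fun v => c (1, v) with hcT
  have hsum : ∑ q : Fin 2 × V, c q = (∑ v, cB v) + (∑ v, cT v) := by
    rw [Fintype.sum_prod_type, Fin.sum_univ_two]
  by_cases hcase1 : p ≤ ∑ v, cT v
  · -- enough pebbles in the top copy
    refine Aux.solvable_le ?_ (lift_solvable (hk := hk) (i := 1) (h1 cT hcase1))
    rintro ⟨j, w⟩
    rcases fin2 j with rfl | rfl
    · simp [emb]
    · simp [emb, hcT]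
  by_cases hcase2 : p ≤ (∑ v, cT v) + ∑ v, cB v / k
  · -- push everything possible to the top, then solve in the top copy
    have hc0 : c = fun q => if q.1 = 0 then cB q.2 else cT q.2 := by
      funext q
      obtain ⟨j, w⟩ := q
      rcases fin2 j with rfl | rfl <;> simp [hcB, hcT]
    have hreach := push_all (G := G) (hk := hk) cB cT
    rw [← hc0] at hreach
    apply Aux.solvable_of_reach hreach
    have hsolvtop : G.Solvable 1 t (fun v => cT v + cB v / k) :=
      h1 _ (by rw [Finset.sum_add_distrib]; exact hcase2)
    refine Aux.solvable_le ?_ (lift_solvable (hk := hk) (i := 1) hsolvtop)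
    rintro ⟨j, w⟩
    rcases fin2 j with rfl | rfl
    · simp [emb]
    · simp [emb]
  · -- the hard case
    obtain ⟨m2, rfl⟩ : ∃ m2, k = m2 + 2 := ⟨k - 2, by omega⟩
    set a := ∑ v, cT v with ha
    set b := ∑ v, cB v with hbdef
    set x := ∑ v, cB v / (m2 + 2) with hx
    set s := supp cB with hs
    have hab : (m2 + 2) * p ≤ b + a := by rw [hbdef, ha, ← hsum]; exact hc
    have hb_le : b ≤ (m2 + 2) * x + (m2 + 1) * s := by
      have hub : ∀ v, cB v ≤ (m2 + 2) * (cB v / (m2 + 2)) +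
          (m2 + 1) * (if 0 < cB v then 1 else 0) := by
        intro v
        by_cases h : 0 < cB v
        · rw [if_pos h]
          have hmod := Nat.div_add_mod (cB v) (m2 + 2)
          have hlt : cB v % (m2 + 2) < m2 + 2 := Nat.mod_lt _ (by omega)
          omega
        · rw [if_neg h]; omega
      calc b = ∑ v, cB v := rfl
        _ ≤ ∑ v, ((m2 + 2) * (cB v / (m2 + 2)) + (m2 + 1) * (if 0 < cB v then 1 else 0)) :=
            Finset.sum_le_sum fun v _ => hub v
        _ = (m2 + 2) * x + (m2 + 1) * s := by
            rw [Finset.sum_add_distrib, ← Finset.mul_sum, ← Finset.mul_sum, Finset.sum_boole]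
            simp [hx, hs, supp]
    have hax' : a + x + 1 ≤ p := by omega
    have h4 : (m2 + 2) * (a + x + 1) ≤ (m2 + 2) * p := Nat.mul_le_mul_left _ hax'
    have e1 : (m2 + 2) * (a + x + 1) = (m2 + 2) * a + (m2 + 2) * x + (m2 + 2) := by ring
    have hs2 : a + 2 ≤ s := by
      by_contra hcon
      push_neg at hcon
      have h5 : (m2 + 1) * s ≤ (m2 + 1) * (a + 1) := Nat.mul_le_mul_left _ (by omega)
      have e3 : (m2 + 1) * (a + 1) = (m2 + 1) * a + (m2 + 1) := by ring
      have e4 : (m2 + 2) * a = (m2 + 1) * a + a := by ring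
      omega
    have e5 : (m2 + 2) * p = m2 * p + 2 * p := by ring
    have hmp : m2 * p ≤ b := by omega
    set B := b - m2 * p with hBdef
    have hB : B + m2 * p = b := Nat.sub_add_cancel hmp
    have hBa : 2 * p ≤ a + B := by omega
    have hNle : B ≤ ∑ v, cB v := by omega
    obtain ⟨e, hle, hesum, hesupp⟩ := exists_sub cB B hNle
    have hPhi : 2 * p + 1 ≤ (∑ v, e v) + supp e := by
      rcases le_total s B with hsB | hBs
      · rw [min_eq_left hsB] at hesupp
        omega
      · rw [min_eq_right hBs] at hesupp
        omega
    obtain ⟨c', hc'le, hsolv2, -⟩ := h2 ((∑ v, e v) + supp e - (2 * p + 1)) e (by omega)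
    have hfs : m2 * p ≤ ∑ v, (cB v - e v) := by
      have hsplit : ∑ v, ((cB v - e v) + e v) = ∑ v, cB v :=
        Finset.sum_congr rfl fun v _ => by have := hle v; omega
      rw [Finset.sum_add_distrib, hesum] at hsplit
      omega
    have hchunk : G.Solvable m2 t (fun v => cB v - e v) := chunk h1 m2 _ hfs
    have hsolvk := Aux.solvable_add hsolv2 hchunk
    rw [Nat.add_comm] at hsolvk
    have hlift := lift_solvable (hk := hk) (i := 0) hsolvk
    have hsolvP : ((arrowGraph (m2 + 2) hk).box G).Solvable (m2 + 2) ((0 : Fin 2), t) c := by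
      refine Aux.solvable_le ?_ hlift
      rintro ⟨j, w⟩
      rcases fin2 j with rfl | rfl
      · have h6 := hc'le w
        have h7 := hle w
        have h8 : c ((0 : Fin 2), w) = cB w := rfl
        simp only [emb]
        simp only [reduceIte]
        omega
      · simp [emb]
    obtain ⟨r, hreach, hr⟩ := hsolvP
    have hstep := cross_step (G := G) (hk := hk) (v := t) hr
    refine ⟨_, hreach.tail hstep, ?_⟩
    have hne : ((1 : Fin 2), t) ≠ ((0 : Fin 2), t) := by simp
    rw [if_neg hne, if_pos rfl]
    omega
end

section
/- Let G and H be edge-weighted digraphs and let φ : G → H be a surjective homomorphism. Then for every vertex t of G, π(H, φ(t)) ≤ π(G, t), and for all n, k ∈ ℕ, τ_{n,k}(H, φ(t)) ≤ τ_{n,k}(G, t). -/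
open Finset

section Aux

variable {V W : Type} [Fintype V] [DecidableEq V] [Fintype W] [DecidableEq W]

/-- The pushforward of a configuration along a map. -/
def pushCfg (φ : V → W) (c : V → ℕ) : W → ℕ :=
  fun w => ∑ v ∈ univ.filter (fun v => φ v = w), c v

lemma le_pushCfg (φ : V → W) (c : V → ℕ) (v : V) : c v ≤ pushCfg φ c (φ v) :=
  Finset.single_le_sum (fun _ _ => Nat.zero_le _) (by simp)

lemma pushCfg_step {G : EWDigraph V} {H : EWDigraph W} {φ : V → W}
    (hhom : ∀ u v, G.Edge u v →
      H.Edge (φ u) (φ v) ∧ G.weight u v = H.weight (φ u) (φ v))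
    {b c₂ : V → ℕ} (hstep : G.Step b c₂) {e : W → ℕ}
    (he : ∀ w, pushCfg φ b w ≤ e w) :
    ∃ e₂, Relation.ReflTransGen H.Step e e₂ ∧ ∀ w, pushCfg φ c₂ w ≤ e₂ w := by
  obtain ⟨u, v, hedge, hge, rfl⟩ := hstep
  have hω2 : 2 ≤ G.weight u v := G.weight_ge u v hedge
  have key : ∀ w, pushCfg φ (fun x => if x = u then b u - G.weight u v
      else if x = v then b v + 1 else b x) w + (if φ u = w then G.weight u v else 0)
      = pushCfg φ b w + (if φ v = w ∧ v ≠ u then 1 else 0) := by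
    intro w
    unfold pushCfg
    have h1 : (if φ u = w then G.weight u v else 0)
        = ∑ x ∈ univ.filter (fun x => φ x = w), (if x = u then G.weight u v else 0) := by
      rw [Finset.sum_ite_eq' (univ.filter (fun x => φ x = w)) u
        (fun _ => G.weight u v)]
      simp
    have h2 : (if φ v = w ∧ v ≠ u then 1 else 0)
        = ∑ x ∈ univ.filter (fun x => φ x = w), (if x = v then (if x ≠ u then 1 else 0) else 0) := by
      rw [Finset.sum_ite_eq' (univ.filter (fun x => φ x = w)) v
        (fun x => if x ≠ u then 1 else 0)]
      by_cases hvw : φ v = w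
      · by_cases hvu : v = u <;> simp [hvw, hvu]
      · simp [hvw]
    rw [h1, h2, ← Finset.sum_add_distrib, ← Finset.sum_add_distrib]
    apply Finset.sum_congr rfl
    intro x _
    by_cases hxu : x = u
    · rw [if_pos hxu, if_pos hxu]
      have h0 : (if x = v then (if x ≠ u then 1 else 0) else 0) = 0 := by
        by_cases hxv : x = v
        · rw [if_pos hxv, if_neg (by simpa using hxu)]
        · rw [if_neg hxv]
      rw [h0, hxu]
      omega
    · rw [if_neg hxu, if_neg hxu]
      by_cases hxv : x = v
      · rw [if_pos hxv, if_pos hxv, hxv, if_pos (hxv ▸ hxu)]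
      · rw [if_neg hxv, if_neg hxv]
  by_cases hφ : φ u = φ v
  · refine ⟨e, Relation.ReflTransGen.refl, fun w => ?_⟩
    have hk := key w
    have hew := he w
    rw [← hφ] at hk
    by_cases hw : φ u = w
    · by_cases hvu : v = u
      · rw [if_pos hw, if_neg (fun h : φ u = w ∧ v ≠ u => h.2 hvu)] at hk
        omega
      · rw [if_pos hw, if_pos ⟨hw, hvu⟩] at hk
        omega
    · rw [if_neg hw, if_neg (fun h => hw h.1)] at hk
      omega
  · have hW := hhom u v hedge
    have hwe : G.weight u v ≤ e (φ u) :=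
      le_trans hge (le_trans (le_pushCfg φ b u) (he (φ u)))
    refine ⟨fun w => if w = φ u then e (φ u) - H.weight (φ u) (φ v)
        else if w = φ v then e (φ v) + 1 else e w,
      Relation.ReflTransGen.single ⟨φ u, φ v, hW.1, hW.2 ▸ hwe, rfl⟩, fun w => ?_⟩
    beta_reduce
    have hk := key w
    have hew := he w
    have hvu : v ≠ u := fun h => hφ (h ▸ rfl)
    by_cases hwu : w = φ u
    · subst hwu
      rw [if_pos rfl, if_neg (fun h : φ v = φ u ∧ _ => hφ h.1.symm)] at hk
      rw [if_pos (rfl : φ u = φ u), ← hW.2]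
      omega
    · by_cases hwv : w = φ v
      · subst hwv
        rw [if_neg (fun h => hwu h.symm), if_pos ⟨rfl, hvu⟩] at hk
        rw [if_neg hwu, if_pos (rfl : φ v = φ v)]
        omega
      · rw [if_neg (fun h => hwu h.symm), if_neg (fun h => hwv h.1.symm)] at hk
        rw [if_neg hwu, if_neg hwv]
        omega

lemma pushCfg_reach {G : EWDigraph V} {H : EWDigraph W} {φ : V → W}
    (hhom : ∀ u v, G.Edge u v →
      H.Edge (φ u) (φ v) ∧ G.weight u v = H.weight (φ u) (φ v))
    {c₁ c₂ : V → ℕ} (h : Relation.ReflTransGen G.Step c₁ c₂) :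
    ∀ e, (∀ w, pushCfg φ c₁ w ≤ e w) →
      ∃ e₂, Relation.ReflTransGen H.Step e e₂ ∧ ∀ w, pushCfg φ c₂ w ≤ e₂ w := by
  induction h with
  | refl => exact fun e he => ⟨e, Relation.ReflTransGen.refl, he⟩
  | tail _ hstep ih =>
      intro e he
      obtain ⟨e₁, hr₁, h₁⟩ := ih e he
      obtain ⟨e₂, hr₂, h₂⟩ := pushCfg_step hhom hstep h₁
      exact ⟨e₂, hr₁.trans hr₂, h₂⟩

/-- Pullback of a configuration along a section. -/
def pbCfg (φ : V → W) (ψ : W → V) (f : W → ℕ) : V → ℕ :=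
  fun v => if v = ψ (φ v) then f (φ v) else 0

lemma pbCfg_apply_sect {φ : V → W} {ψ : W → V} (hψ : ∀ w, φ (ψ w) = w) (f : W → ℕ) (w : W) :
    pbCfg φ ψ f (ψ w) = f w := by
  unfold pbCfg
  rw [hψ w, if_pos rfl]

lemma pbCfg_sum {φ : V → W} {ψ : W → V} (hψ : ∀ w, φ (ψ w) = w) (f : W → ℕ) :
    ∑ v, pbCfg φ ψ f v = ∑ w, f w := by
  unfold pbCfg
  rw [← Finset.sum_filter]
  refine Finset.sum_nbij' φ ψ (fun a _ => Finset.mem_univ _) ?_ ?_ ?_ ?_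
  · intro w _
    simp [hψ w]
  · intro v hv
    exact ((Finset.mem_filter.mp hv).2).symm
  · intro w _
    exact hψ w
  · intro v _
    rfl

lemma pbCfg_supp {φ : V → W} {ψ : W → V} (hψ : ∀ w, φ (ψ w) = w) (f : W → ℕ) :
    supp (pbCfg φ ψ f) = supp f := by
  have hinj : Function.Injective ψ := fun a b h => by rw [← hψ a, ← hψ b, h]
  unfold supp
  have : univ.filter (fun v => 0 < pbCfg φ ψ f v)
      = (univ.filter fun w => 0 < f w).image ψ := by
    ext v
    simp only [Finset.mem_filter, Finset.mem_image, Finset.mem_univ, true_and]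
    constructor
    · intro hv
      unfold pbCfg at hv
      by_cases h : v = ψ (φ v)
      · rw [if_pos h] at hv
        exact ⟨φ v, hv, h.symm⟩
      · rw [if_neg h] at hv; omega
    · rintro ⟨w, hw, rfl⟩
      rw [pbCfg_apply_sect hψ]
      exact hw
  rw [this, Finset.card_image_of_injective _ hinj]

lemma pushCfg_of_supported {φ : V → W} {ψ : W → V} (hψ : ∀ w, φ (ψ w) = w)
    {c' : V → ℕ} (hc : ∀ v, v ≠ ψ (φ v) → c' v = 0) (w : W) :
    pushCfg φ c' w = c' (ψ w) := by
  unfold pushCfg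
  apply Finset.sum_eq_single_of_mem
  · simp [hψ w]
  · intro v hv hne
    apply hc
    intro h
    exact hne (h.trans (by rw [(Finset.mem_filter.mp hv).2]))

lemma pbCfg_rsize {φ : V → W} {ψ : W → V} (hψ : ∀ w, φ (ψ w) = w) (k : ℕ) (f : W → ℕ) :
    rsize k (pbCfg φ ψ f) = rsize k f := by
  unfold rsize
  rw [pbCfg_supp hψ]
  congr 1
  rw [← Nat.cast_sum, ← Nat.cast_sum, pbCfg_sum hψ]

end Aux

/-- Surjective homomorphisms transfer pebbling bounds: `π(H, φ(t)) ≤ π(G, t)` and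
`τ_{n,k}(H, φ(t)) ≤ τ_{n,k}(G, t)`. -/
theorem stmt_13 {V W : Type} [Fintype V] [DecidableEq V] [Fintype W] [DecidableEq W]
    (G : EWDigraph V) (H : EWDigraph W) (φ : V → W)
    (hsurj : Function.Surjective φ)
    (hhom : ∀ u v, G.Edge u v →
      H.Edge (φ u) (φ v) ∧ G.weight u v = H.weight (φ u) (φ v)) (t : V) :
    (∀ p, G.PiBound 1 t p → H.PiBound 1 (φ t) p) ∧
    (∀ n k p, G.TauBound n k t p → H.TauBound n k (φ t) p) := by
  classical
  have hψ : ∀ w, φ (Function.surjInv hsurj w) = w := fun w => Function.surjInv_eq hsurj w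
  set ψ := Function.surjInv hsurj
  have hpbsupp : ∀ f : W → ℕ, ∀ v, v ≠ ψ (φ v) → pbCfg φ ψ f v = 0 :=
    fun f v hv => if_neg hv
  constructor
  · intro p hG d hd
    have hc : p ≤ ∑ v, pbCfg φ ψ d v := by rw [pbCfg_sum hψ]; exact hd
    obtain ⟨c₂, hreach, h1⟩ := hG _ hc
    have hpb : ∀ w, pushCfg φ (pbCfg φ ψ d) w ≤ d w := by
      intro w
      rw [pushCfg_of_supported hψ (hpbsupp d) w, pbCfg_apply_sect hψ]
    obtain ⟨d₂, hr, hle⟩ := pushCfg_reach hhom hreach d hpb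
    exact ⟨d₂, hr, le_trans (le_trans h1 (le_pushCfg φ c₂ t)) (hle (φ t))⟩
  · intro n k p hG m d hd
    have hsum : ∑ v, pbCfg φ ψ d v + supp (pbCfg φ ψ d) = p + 1 + m := by
      rw [pbCfg_sum hψ, pbCfg_supp hψ]; exact hd
    obtain ⟨c', hle, ⟨c₂, hreach, hn⟩, hr⟩ := hG m _ hsum
    have hc'supp : ∀ v, v ≠ ψ (φ v) → c' v = 0 := fun v hv =>
      Nat.le_zero.mp (le_trans (hle v) (le_of_eq (hpbsupp d v hv)))
    have hpush : ∀ w, pushCfg φ c' w = c' (ψ w) :=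
      fun w => pushCfg_of_supported hψ hc'supp w
    refine ⟨fun w => c' (ψ w), fun w => ?_, ?_, ?_⟩
    · calc c' (ψ w) ≤ pbCfg φ ψ d (ψ w) := hle _
        _ = d w := pbCfg_apply_sect hψ d w
    · obtain ⟨d₂, hr2, hle2⟩ := pushCfg_reach hhom hreach (fun w => c' (ψ w))
        (fun w => (hpush w).le)
      exact ⟨d₂, hr2, le_trans (le_trans hn (le_pushCfg φ c₂ t)) (hle2 (φ t))⟩
    · have hkey : (fun v => pbCfg φ ψ d v - c' v)
          = pbCfg φ ψ (fun w => d w - c' (ψ w)) := by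
        funext v
        by_cases hv : v = ψ (φ v)
        · simp only [pbCfg, if_pos hv]
          rw [← hv]
        · rw [hpbsupp d v hv, hc'supp v hv, hpbsupp _ v hv]
      calc (m : ℤ) ≤ rsize k (fun v => pbCfg φ ψ d v - c' v) := hr
        _ = rsize k (pbCfg φ ψ (fun w => d w - c' (ψ w))) := by rw [hkey]
        _ = rsize k (fun w => d w - c' (ψ w)) := pbCfg_rsize hψ k _
end

section
/- (Pebbling construction) Let G be an edge-weighted digraph, A a set, and a_1, a_2, …, a_n ∈ A a sequence with index set I = {1, 2, …, n}. For each vertex v of G let a predicate 𝒫_v on subsets of I be given. Assume: (I) for every i ∈ I there is a vertex v with 𝒫_v({i}); and (II) for every edge (u,v) of G with k = ω_G(u,v) and every sequence S_1, S_2, …, S_k of pairwise disjoint non-empty subsets of I with 𝒫_u(S_i) for all i ≤ k, there is a non-empty set S ⊆ S_1 ∪ S_2 ∪ ⋯ ∪ S_k with 𝒫_v(S). If t is a vertex with π(G, t) ≤ n, then there exists a non-empty set S ⊆ I with 𝒫_t(S). -/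
open Finset

def GoodFam {V : Type} {n : ℕ} (P : V → Finset (Fin n) → Prop) (c : V → ℕ) : Prop :=
  ∃ F : V → Finset (Finset (Fin n)),
    (∀ v, (F v).card = c v) ∧
    (∀ v S, S ∈ F v → S.Nonempty ∧ P v S) ∧
    (∀ u v S T, S ∈ F u → T ∈ F v → (u ≠ v ∨ S ≠ T) → Disjoint S T)

lemma goodFam_step {V : Type} [DecidableEq V] (G : EWDigraph V) {n : ℕ}
    {P : V → Finset (Fin n) → Prop}
    (hstep : ∀ u v : V, G.Edge u v →
      ∀ S : Fin (G.weight u v) → Finset (Fin n),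
        (∀ i j, i ≠ j → Disjoint (S i) (S j)) →
        (∀ i, (S i).Nonempty) →
        (∀ i, P u (S i)) →
        ∃ T : Finset (Fin n), T.Nonempty ∧ T ⊆ Finset.univ.biUnion S ∧ P v T)
    {c₁ c₂ : V → ℕ} (h : G.Step c₁ c₂) (hg : GoodFam P c₁) : GoodFam P c₂ := by
  classical
  obtain ⟨u, v, he, hw, rfl⟩ := h
  obtain ⟨F, hcard, hmem, hdisj⟩ := hg
  set k := G.weight u v with hk
  by_cases huv : u = v
  · -- degenerate self-loop: just remove k sets at u
    have hks : c₁ u - k ≤ (F u).card := by rw [hcard]; omega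
    obtain ⟨t', ht'sub, ht'card⟩ := Finset.exists_subset_card_eq hks
    have key : ∀ x X, X ∈ (if x = u then t' else F x) → X ∈ F x := by
      intro x X hX
      by_cases hx : x = u
      · rw [if_pos hx] at hX; rw [hx]; exact ht'sub hX
      · rwa [if_neg hx] at hX
    refine ⟨fun w => if w = u then t' else F w, ?_, ?_, ?_⟩
    · intro w
      by_cases hw' : w = u
      · simp [hw', ht'card]
      · have hw'' : w ≠ v := fun h => hw' (h.trans huv.symm)
        simp only [if_neg hw', if_neg hw'', hcard]
    · intro w S hS
      exact hmem w S (key w S hS)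
    · intro w w' W W' hW hW' hne
      exact hdisj w w' W W' (key w W hW) (key w' W' hW') hne
  · -- real move
    have hks : k ≤ (F u).card := by rw [hcard]; exact hw
    obtain ⟨t', ht'sub, ht'card⟩ := Finset.exists_subset_card_eq hks
    have e : t' ≃ Fin k := t'.equivFinOfCardEq ht'card
    set S : Fin k → Finset (Fin n) := fun i => (e.symm i : Finset (Fin n)) with hSdef
    have hSmem : ∀ i, S i ∈ t' := fun i => (e.symm i).2
    have hSinj : Function.Injective S := by
      intro i j hij
      exact e.symm.injective (Subtype.coe_injective hij)
    obtain ⟨T, hTne, hTsub, hTP⟩ := hstep u v he S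
      (fun i j hij => hdisj u u _ _ (ht'sub (hSmem i)) (ht'sub (hSmem j))
        (Or.inr fun h => hij (hSinj h)))
      (fun i => (hmem u _ (ht'sub (hSmem i))).1)
      (fun i => (hmem u _ (ht'sub (hSmem i))).2)
    have hTT : ¬ Disjoint T T := fun hd =>
      hTne.ne_empty (by simpa using disjoint_self.mp hd)
    have hTd : ∀ w W, W ∈ F w → (w ≠ u ∨ W ∉ t') → Disjoint T W := by
      intro w W hW hcond
      refine Finset.disjoint_left.mpr ?_ |>.mono_left hTsub
      intro x hx
      simp only [Finset.mem_biUnion, Finset.mem_univ, true_and] at hx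
      obtain ⟨i, hi⟩ := hx
      intro hxW
      have : Disjoint (S i) W := by
        refine hdisj u w _ _ (ht'sub (hSmem i)) hW ?_
        rcases hcond with h | h
        · exact Or.inl (Ne.symm h)
        · exact Or.inr (fun hh => h (hh ▸ hSmem i))
      exact (Finset.disjoint_left.mp this hi) hxW
    have hTnotin : T ∉ F v := fun hTv => hTT (hTd v T hTv (Or.inl (Ne.symm huv)))
    set F₂ : V → Finset (Finset (Fin n)) :=
      fun w => if w = u then F u \ t' else if w = v then insert T (F v) else F w with hF₂
    have hmem₂ : ∀ w W, W ∈ F₂ w →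
        (W = T ∧ w = v) ∨ (W ∈ F w ∧ (w = u → W ∉ t') ∧ W ≠ T) := by
      intro w W hW
      simp only [hF₂] at hW
      by_cases h1 : w = u
      · rw [if_pos h1, Finset.mem_sdiff] at hW
        have hWF : W ∈ F w := by rw [h1]; exact hW.1
        refine Or.inr ⟨hWF, fun _ => hW.2, ?_⟩
        intro hWT
        have hd := hTd u W (h1 ▸ hWF) (Or.inr hW.2)
        rw [hWT] at hd
        exact absurd hd hTT
      · rw [if_neg h1] at hW
        by_cases h2 : w = v
        · rw [if_pos h2, Finset.mem_insert] at hW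
          rcases hW with rfl | hW
          · exact Or.inl ⟨rfl, h2⟩
          · refine Or.inr ⟨h2 ▸ hW, fun h => absurd h h1, ?_⟩
            intro hWT; exact hTnotin (hWT ▸ hW)
        · rw [if_neg h2] at hW
          refine Or.inr ⟨hW, fun h => absurd h h1, ?_⟩
          intro hWT
          have hd := hTd w W hW (Or.inl h1)
          rw [hWT] at hd
          exact absurd hd hTT
    refine ⟨F₂, ?_, ?_, ?_⟩
    · intro w
      simp only [hF₂]
      by_cases h1 : w = u
      · simp only [if_pos h1]
        rw [Finset.card_sdiff_of_subset ht'sub, ht'card, hcard]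
      · simp only [if_neg h1]
        by_cases h2 : w = v
        · simp only [if_pos h2]
          rw [Finset.card_insert_of_notMem hTnotin, hcard]
        · simp only [if_neg h2]
          exact hcard w
    · intro w W hW
      rcases hmem₂ w W hW with ⟨rfl, rfl⟩ | ⟨hW', _, _⟩
      · exact ⟨hTne, hTP⟩
      · exact hmem w W hW'
    · intro w w' W W' hW hW' hne
      rcases hmem₂ w W hW with ⟨rfl, rfl⟩ | ⟨hWm, hWt, hWT⟩ <;>
        rcases hmem₂ w' W' hW' with ⟨h2a, h2b⟩ | ⟨hW'm, hW't, hW'T⟩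
      · rw [h2a, h2b] at hne
        rcases hne with h | h <;> exact absurd rfl h
      · refine hTd w' W' hW'm ?_
        by_cases h : w' = u
        · exact Or.inr (hW't h)
        · exact Or.inl h
      · rw [h2a]
        refine (hTd w W hWm ?_).symm
        by_cases h : w = u
        · exact Or.inr (hWt h)
        · exact Or.inl h
      · exact hdisj w w' W W' hWm hW'm hne

/-- The pebbling construction: from the initialization and step properties of the
well-placedness predicates and `π(G,t) ≤ n`, a non-empty well-placed subset of the
index set is obtained. -/
theorem stmt_16 {V : Type} [Fintype V] [DecidableEq V] (G : EWDigraph V)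
    (A : Type) (n : ℕ) (a : Fin n → A)
    (P : V → Finset (Fin n) → Prop)
    (hinit : ∀ i : Fin n, ∃ v : V, P v {i})
    (hstep : ∀ u v : V, G.Edge u v →
      ∀ S : Fin (G.weight u v) → Finset (Fin n),
        (∀ i j, i ≠ j → Disjoint (S i) (S j)) →
        (∀ i, (S i).Nonempty) →
        (∀ i, P u (S i)) →
        ∃ T : Finset (Fin n), T.Nonempty ∧ T ⊆ Finset.univ.biUnion S ∧ P v T)
    (t : V) (ht : G.PiBound 1 t n) :
    ∃ S : Finset (Fin n), S.Nonempty ∧ P t S := by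
  classical
  choose f hf using hinit
  obtain ⟨c', hrt, hct⟩ := ht (fun v => (Finset.univ.filter fun i => f i = v).card) (by
    have h1 : (Finset.univ : Finset (Fin n)).card
        = ∑ v, (Finset.univ.filter fun i => f i = v).card :=
      Finset.card_eq_sum_card_fiberwise (fun i _ => Finset.mem_univ (f i))
    rw [← h1]
    simp)
  have hgood : GoodFam P c' := by
    have h0 : GoodFam P (fun v => (Finset.univ.filter fun i => f i = v).card) := by
      refine ⟨fun v => (Finset.univ.filter fun i => f i = v).image
        (fun i => ({i} : Finset (Fin n))), ?_, ?_, ?_⟩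
      · intro v
        exact Finset.card_image_of_injective _ Finset.singleton_injective
      · intro v S hS
        simp only [Finset.mem_image, Finset.mem_filter, Finset.mem_univ, true_and] at hS
        obtain ⟨i, hfi, rfl⟩ := hS
        exact ⟨Finset.singleton_nonempty i, hfi ▸ hf i⟩
      · intro u v S T hS hT hne
        simp only [Finset.mem_image, Finset.mem_filter, Finset.mem_univ, true_and] at hS hT
        obtain ⟨i, hfi, rfl⟩ := hS
        obtain ⟨j, hfj, rfl⟩ := hT
        have hij : i ≠ j := by
          rintro rfl
          rcases hne with h | h
          · exact h (hfi.symm.trans hfj)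
          · exact h rfl
        exact Finset.disjoint_singleton.mpr hij
    clear hct
    induction hrt with
    | refl => exact h0
    | tail _ hstep' ih => exact goodFam_step G hstep hstep' ih
  obtain ⟨F, hcard, hmem, _⟩ := hgood
  obtain ⟨S, hS⟩ := Finset.card_pos.mp (hct.trans_eq (hcard t).symm)
  exact ⟨S, (hmem t S hS).1, (hmem t S hS).2⟩
end
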